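/- arXiv:2302.11035 — 11 statements merged into one kernel-verified Lean document; each statement's English description precedes it below -/
import Mathlib

section
/- Let M be a courteously colored matroid of rank r whose ground set is colored with exactly k colors, where k ≥ 2 and r ≥ 1. Then the ground set of M has at least ⌈k·r/(k-1)⌉ elements. -/
/-!
For each color `c`, some basis avoids `c`, so the elements of color `c` and that basis are
disjoint subsets of the ground set: `|col⁻¹(c)| + r ≤ n`. Summing over the `k` colors gives
`n + k r ≤ k n`, i.e. `k r ≤ (k - 1) n`, and `(k r + k - 2) / (k - 1)` is `⌈k r / (k - 1)⌉`.
-/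

/-- A colored matroid is courteously colored if after deleting the elements of any single color
the rank does not change; equivalently, for every color some basis avoids that color. -/
def Matroid.CourteouslyColored {α C : Type*} (M : Matroid α) (col : α → C) : Prop :=
  ∀ c : C, ∃ B, M.IsBase B ∧ ∀ e ∈ B, col e ≠ c

theorem Set.ncard_add_mul_le_mul_of_ncard_fiber_add_le {α β : Type*} {s : Set α}
    (hs : s.Finite) (f : α → β) (r : ℕ)
    (h : ∀ c ∈ f '' s, (s ∩ f ⁻¹' {c}).ncard + r ≤ s.ncard) :
    s.ncard + (f '' s).ncard * r ≤ (f '' s).ncard * s.ncard := by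
  classical
  lift s to Finset α using hs
  simp only [← Finset.coe_image, Set.ncard_coe_finset] at h ⊢
  have hfiber : ∀ c, (↑s ∩ f ⁻¹' {c} : Set α) = ↑{x ∈ s | f x = c} := fun c => by ext; simp
  simp only [hfiber, Set.ncard_coe_finset] at h
  calc s.card + (s.image f).card * r
      = ∑ c ∈ s.image f, ({x ∈ s | f x = c}.card + r) := by
        rw [Finset.sum_add_distrib, ← Finset.card_eq_sum_card_image, Finset.sum_const,
          smul_eq_mul]
    _ ≤ ∑ _c ∈ s.image f, s.card := Finset.sum_le_sum h
    _ = (s.image f).card * s.card := by rw [Finset.sum_const, smul_eq_mul]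

theorem Nat.mul_add_sub_two_div_sub_one_le {k r n : ℕ} (h : n + k * r ≤ k * n) :
    (k * r + k - 2) / (k - 1) ≤ n := by
  rcases Nat.lt_or_ge k 2 with hk | hk
  · rw [Nat.sub_eq_zero_of_le (by omega : k ≤ 1), Nat.div_zero]
    exact n.zero_le
  have hkr : k * r ≤ (k - 1) * n := by
    rw [Nat.sub_one_mul]
    omega
  rw [Nat.div_le_iff_le_mul_add_pred (by omega)]
  omega

theorem Matroid.CourteouslyColored.ncard_inter_preimage_add_le {α C : Type*} {M : Matroid α}
    {col : α → C} {r : ℕ} (hc : M.CourteouslyColored col) (hE : M.E.Finite)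
    (hrank : ∀ B, M.IsBase B → B.ncard = r) (c : C) :
    (M.E ∩ col ⁻¹' {c}).ncard + r ≤ M.E.ncard := by
  obtain ⟨B, hB, hBc⟩ := hc c
  have hdisj : Disjoint (M.E ∩ col ⁻¹' {c}) B :=
    Set.disjoint_left.2 fun e he heB => hBc e heB he.2
  rw [← hrank B hB, ← Set.ncard_union_eq hdisj (hE.subset Set.inter_subset_left)
    (hE.subset hB.subset_ground)]
  exact Set.ncard_le_ncard (Set.union_subset Set.inter_subset_left hB.subset_ground) hE

theorem stmt6_general {α C : Type*} (M : Matroid α) (col : α → C) (k r : ℕ)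
    (hE : M.E.Finite)
    (hcols : (col '' M.E).ncard = k)
    (hrank : ∀ B, M.IsBase B → B.ncard = r)
    (hc : M.CourteouslyColored col) :
    (k * r + k - 2) / (k - 1) ≤ M.E.ncard := by
  apply Nat.mul_add_sub_two_div_sub_one_le
  rw [← hcols]
  exact Set.ncard_add_mul_le_mul_of_ncard_fiber_add_le hE col r
    fun c _ => hc.ncard_inter_preimage_add_le hE hrank c

/-- A courteously colored matroid of rank `r ≥ 1` whose ground set is colored with exactly
`k ≥ 2` colors has at least `⌈k·r/(k-1)⌉` elements. -/
theorem stmt6 {α C : Type*} (M : Matroid α) (col : α → C) (k r : ℕ)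
    (hE : M.E.Finite) (hk : 2 ≤ k) (hr : 1 ≤ r)
    (hcols : (col '' M.E).ncard = k)
    (hrank : ∀ B, M.IsBase B → B.ncard = r)
    (hc : M.CourteouslyColored col) :
    (k * r + k - 2) / (k - 1) ≤ M.E.ncard :=
  stmt6_general M col k r hE hcols hrank hc
end

section
/- Let M = (S, I) be a courteously colored matroid of rank r such that for every element s in S, the matroid obtained by deleting s is not courteously colored. Then |S| ≤ 2r. -/
/-!
Fix a base `B`. Minimality says that every element `s` is pinned by some color `c`: every base
avoiding `c` contains `s`. For a color `c`, courteousness lets us extend the `c`-free part of `B`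
to a base `B'` avoiding `c`. Then `B'` contains that part together with every element outside `B`
pinned by `c`, and `|B'| = |B|`, so at most `|B ∩ col⁻¹ c|` elements outside `B` are pinned
by `c`. Summing over the colors gives `|E \ B| ≤ |B| = r`.
-/

open Finset in
theorem Set.ncard_le_ncard_of_ncard_fiber_le {α β : Type*} {s t : Set α} (hs : s.Finite)
    (ht : t.Finite) (f g : α → β)
    (h : ∀ b, (s ∩ f ⁻¹' {b}).ncard ≤ (t ∩ g ⁻¹' {b}).ncard) : s.ncard ≤ t.ncard := by
  classical
  lift s to Finset α using hs
  lift t to Finset α using ht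
  have hfiber : ∀ b, #{a ∈ s | f a = b} ≤ #{a ∈ t | g a = b} := fun b => by
    rw [← Set.ncard_coe_finset, ← Set.ncard_coe_finset]
    convert h b using 2 <;> ext <;> simp
  let u := s.image f ∪ t.image g
  calc (s : Set α).ncard = ∑ b ∈ u, #{a ∈ s | f a = b} := by
        rw [Set.ncard_coe_finset]
        exact Finset.card_eq_sum_card_fiberwise fun a ha =>
          Finset.mem_union_left _ (Finset.mem_image_of_mem f ha)
    _ ≤ ∑ b ∈ u, #{a ∈ t | g a = b} := Finset.sum_le_sum fun b _ => hfiber b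
    _ = (t : Set α).ncard := by
        rw [Set.ncard_coe_finset]
        exact (Finset.card_eq_sum_card_fiberwise fun a ha =>
          Finset.mem_union_right _ (Finset.mem_image_of_mem g ha)).symm

namespace Matroid

variable {α C : Type*} {M : Matroid α} {col : α → C}

theorem exists_color_forall_isBase_mem_of_not_courteouslyColored {s : α}
    (h : ¬ (M.restrict (M.E \ {s})).CourteouslyColored col) :
    ∃ c, ∀ B, M.IsBase B → (∀ e ∈ B, col e ≠ c) → s ∈ B := by
  simp only [CourteouslyColored, not_forall, not_exists, not_and, not_not] at h
  obtain ⟨c, hc⟩ := h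
  refine ⟨c, fun B hB hBc => by_contra fun hsB => ?_⟩
  have hBs : B ⊆ M.E \ {s} := Set.subset_sdiff_singleton hB.subset_ground hsB
  obtain ⟨e, heB, hec⟩ := hc B (hB.isBasis_of_subset Set.sdiff_subset hBs).isBase_restrict
  exact hBc e heB hec

theorem CourteouslyColored.exists_isBase_avoiding_superset (hc : M.CourteouslyColored col)
    {B : Set α} (hB : M.IsBase B) (c : C) :
    ∃ B', M.IsBase B' ∧ (∀ e ∈ B', col e ≠ c) ∧ B \ col ⁻¹' {c} ⊆ B' := by
  obtain ⟨Bc, hBc, hBcc⟩ := hc c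
  obtain ⟨B', hB', hBB'⟩ := (hB.indep.subset Set.sdiff_subset).subset_isBasis_of_subset
    (Set.sdiff_subset_sdiff_left hB.subset_ground) Set.sdiff_subset
  have hBcX : Bc ⊆ M.E \ col ⁻¹' {c} := fun e he => ⟨hBc.subset_ground he, hBcc e he⟩
  exact ⟨B', hBc.isBase_of_isBasis_superset hBcX hB', fun e he => (hB'.subset he).2, hBB'⟩

theorem CourteouslyColored.ncard_le_ncard_inter_preimage [M.RankFinite]
    (hc : M.CourteouslyColored col) {B K : Set α} (hB : M.IsBase B) (hKB : Disjoint K B) (c : C)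
    (hK : ∀ B', M.IsBase B' → (∀ e ∈ B', col e ≠ c) → K ⊆ B') :
    K.ncard ≤ (B ∩ col ⁻¹' {c}).ncard := by
  obtain ⟨B', hB', hB'c, hBB'⟩ := hc.exists_isBase_avoiding_superset hB c
  have hKB' : K ⊆ B' := hK B' hB' hB'c
  have hdisj : Disjoint K (B \ col ⁻¹' {c}) := hKB.mono_right Set.sdiff_subset
  have hB'fin := hB'.finite
  have hunion : K.ncard + (B \ col ⁻¹' {c}).ncard ≤ B.ncard := by
    rw [← Set.ncard_union_eq hdisj (hB'fin.subset hKB') (hB'fin.subset hBB'),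
      hB.ncard_eq_ncard_of_isBase hB']
    exact Set.ncard_le_ncard (Set.union_subset hKB' hBB') hB'fin
  have hsplit := Set.ncard_inter_add_ncard_sdiff_eq_ncard B (col ⁻¹' {c}) hB.finite
  omega

end Matroid

/-- If `M` is a courteously colored matroid of rank `r` such that deleting any single element
of the ground set destroys the courteous property, then the ground set has at most `2r`
elements. -/
theorem stmt8 {α C : Type*} (M : Matroid α) (col : α → C) (r : ℕ) (hE : M.E.Finite)
    (hc : M.CourteouslyColored col)
    (hrank : ∀ B, M.IsBase B → B.ncard = r)
    (hmin : ∀ s ∈ M.E, ¬ (M.restrict (M.E \ {s})).CourteouslyColored col) :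
    M.E.ncard ≤ 2 * r := by
  have : M.Finite := ⟨hE⟩
  obtain hE₀ | ⟨s₀, hs₀⟩ := M.E.eq_empty_or_nonempty
  · simp [hE₀]
  have : Nonempty C := by
    obtain ⟨c, -⟩ := Matroid.exists_color_forall_isBase_mem_of_not_courteouslyColored (hmin s₀ hs₀)
    exact ⟨c⟩
  obtain ⟨B, hB⟩ := M.exists_isBase
  choose! pin hpin using fun s hs =>
    Matroid.exists_color_forall_isBase_mem_of_not_courteouslyColored (hmin s hs)
  have hcompl : (M.E \ B).ncard ≤ B.ncard :=
    Set.ncard_le_ncard_of_ncard_fiber_le hE.sdiff hB.finite pin col fun c =>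
      hc.ncard_le_ncard_inter_preimage hB (Set.disjoint_sdiff_left.mono_left Set.inter_subset_left)
        c fun B' hB' hB'c s ⟨hs, hsc⟩ => hpin s hs.1 B' hB' (hsc ▸ hB'c)
  have hsplit := Set.ncard_sdiff_add_ncard_of_subset hB.subset_ground hE
  have hBr := hrank B hB
  omega
end

section
/- Let M = (S, I) be a courteously colored matroid of rank r, let B be a basis of M, and for each color c let y_c denote the number of elements of color c in B. Then for any superset T of B contained in S and any color c, the rank of T minus the rank of the set of elements of T not colored c is at most y_c; consequently there exists a subset T of S containing B with |T| ≤ 2r such that the restriction of M to T is courteously colored and has rank r. -/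
/-!
Removing the color class `X` of `c` from `T ⊇ B` keeps the independent set `B \ X`, so the rank
drops by at most `|B ∩ X|`. For the construction, extend `B \ X` to a base `B_c` inside
`(B \ X) ∪ A_c`, where `A_c` is a base avoiding `c`. By the symmetric exchange property
`|B_c \ B| = |B \ B_c| ≤ |B ∩ X|`, so adding all `B_c` to `B` costs at most
`∑_c |B ∩ X_c| = |B|` new elements, and every `B_c` is a base of the restriction avoiding `c`.
-/

open Set

lemma Set.encard_eq_sum_encard_inter_fiber {α β : Type*} (f : α → β) (s : Set α)
    (hs : (f '' s).Finite) :
    s.encard = ∑ b ∈ hs.toFinset, (s ∩ {a | f a = b}).encard := by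
  have hfib : s = ⋃ b ∈ f '' s, s ∩ {a | f a = b} := by
    ext a
    simp only [mem_iUnion, mem_inter_iff, mem_ofPred_eq, mem_image, exists_prop]
    exact ⟨fun ha => ⟨f a, ⟨a, ha, rfl⟩, ha, rfl⟩, fun ⟨_, _, ha, _⟩ => ha⟩
  have hdisj : (f '' s).PairwiseDisjoint fun b => s ∩ {a | f a = b} :=
    fun _ _ _ _ hbb' => disjoint_left.2 fun _ ha ha' => hbb' (ha.2.symm.trans ha'.2)
  rw [← finsum_mem_eq_finite_toFinset_sum, ← hs.encard_biUnion hdisj, ← hfib]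

namespace Matroid

variable {α : Type*} {M : Matroid α} {A B I J X Y : Set α}

lemma IsBase.encard_le_encard_sdiff_add_encard (hB : M.IsBase B) (hBX : B ⊆ X)
    (hI : M.IsBasis I X) (hJ : M.IsBasis J Y) :
    I.encard ≤ (B \ Y).encard + J.encard := by
  have hBY : (B ∩ Y).encard ≤ J.encard := by
    rw [hJ.encard_eq_eRk]
    exact (hB.indep.inter_right Y).encard_le_eRk_of_subset inter_subset_right
  calc I.encard = B.encard := hI.encard_eq_encard (hB.isBasis_of_subset hI.subset_ground hBX)
    _ = (B \ Y).encard + (B ∩ Y).encard := (encard_sdiff_add_encard_inter B Y).symm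
    _ ≤ (B \ Y).encard + J.encard := add_le_add_right hBY _

lemma IsBase.exists_isBase_disjoint_encard_diff_le (hB : M.IsBase B) (hA : M.IsBase A)
    (hAX : Disjoint A X) :
    ∃ B', M.IsBase B' ∧ Disjoint B' X ∧ (B' \ B).encard ≤ (B ∩ X).encard := by
  obtain ⟨B', hB', hBB', hB'A⟩ := (hB.indep.sdiff X).exists_isBase_subset_union_isBase hA
  refine ⟨B', hB', disjoint_of_subset_left hB'A (disjoint_union_left.2 ⟨disjoint_sdiff_left, hAX⟩),
    ?_⟩
  rw [hB'.encard_sdiff_comm hB]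
  exact encard_le_encard fun e ⟨heB, heB'⟩ => ⟨heB, by_contra fun heX => heB' (hBB' ⟨heB, heX⟩)⟩

lemma IsBase.exists_superset_courteouslyColored_restrict {C : Type*} (col : α → C)
    (hc : M.CourteouslyColored col) (hB : M.IsBase B) (hBfin : B.Finite) :
    ∃ T, B ⊆ T ∧ T ⊆ M.E ∧ T.encard ≤ 2 * B.encard ∧ (M ↾ T).CourteouslyColored col := by
  have hex (c : C) : ∃ B', M.IsBase B' ∧ Disjoint B' {e | col e = c} ∧
      (B' \ B).encard ≤ (B ∩ {e | col e = c}).encard := by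
    obtain ⟨A, hA, hAc⟩ := hc c
    exact hB.exists_isBase_disjoint_encard_diff_le hA (disjoint_left.2 hAc)
  choose B' hB' hB'c hB'B using hex
  have hs : (col '' B).Finite := hBfin.image col
  set S := hs.toFinset
  set T := B ∪ ⋃ c ∈ S, B' c
  have hBT : B ⊆ T := subset_union_left
  have hTE : T ⊆ M.E :=
    union_subset hB.subset_ground (iUnion₂_subset fun c _ => (hB' c).subset_ground)
  refine ⟨T, hBT, hTE, ?_, fun c => ?_⟩
  · have hTB : T \ B ⊆ ⋃ c ∈ S, (B' c \ B) := by
      simp only [T, union_sdiff_left, iUnion_sdiff, subset_rfl]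
    calc T.encard = (T \ B).encard + B.encard := (encard_sdiff_add_encard_of_subset hBT).symm
      _ ≤ ∑ c ∈ S, (B' c \ B).encard + B.encard :=
          add_le_add_left ((encard_le_encard hTB).trans (S.set_encard_biUnion_le _)) _
      _ ≤ ∑ c ∈ S, (B ∩ {e | col e = c}).encard + B.encard :=
          add_le_add_left (Finset.sum_le_sum fun c _ => hB'B c) _
      _ = 2 * B.encard := by rw [← encard_eq_sum_encard_inter_fiber col B hs, two_mul]
  by_cases hcS : c ∈ S
  · refine ⟨B' c, ((hB' c).isBasis_of_subset hTE ?_).isBase_restrict,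
      fun e he hec => disjoint_left.1 (hB'c c) he hec⟩
    exact (subset_biUnion_of_mem (u := B') hcS).trans subset_union_right
  · refine ⟨B, (hB.isBasis_of_subset hTE hBT).isBase_restrict, fun e he hec => hcS ?_⟩
    simpa [S] using ⟨e, he, hec⟩

end Matroid

/-- Let `M` be a courteously colored matroid of rank `r`, `B` a basis, and for each color `c`
let `y_c` be the number of elements of color `c` in `B`. Then for any `B ⊆ T ⊆ S` and any
color `c`, the rank of `T` minus the rank of the elements of `T` not colored `c` is at most
`y_c`; consequently there is `T ⊆ S` containing `B` with `|T| ≤ 2r` whose restriction is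
courteously colored of rank `r`. -/
theorem stmt9 {α C : Type*} (M : Matroid α) (col : α → C) (r : ℕ) (hE : M.E.Finite)
    (hc : M.CourteouslyColored col)
    (B : Set α) (hB : M.IsBase B) (hBr : B.ncard = r) :
    (∀ T, B ⊆ T → T ⊆ M.E → ∀ c : C, ∀ I J : Set α,
        M.IsBasis I T → M.IsBasis J {e ∈ T | col e ≠ c} →
        I.ncard - J.ncard ≤ (B ∩ {e | col e = c}).ncard) ∧
    ∃ T, B ⊆ T ∧ T ⊆ M.E ∧ T.ncard ≤ 2 * r ∧
      (M.restrict T).CourteouslyColored col ∧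
      ∃ B', (M.restrict T).IsBase B' ∧ B'.ncard = r := by
  have hfin {X : Set α} (hX : X ⊆ M.E) : X.Finite := hE.subset hX
  refine ⟨fun T hBT hTE c I J hI hJ => ?_, ?_⟩
  · have hBc : B \ {e ∈ T | col e ≠ c} = B ∩ {e | col e = c} := by
      ext e
      simp only [mem_sdiff, mem_ofPred_eq, mem_inter_iff, not_and, not_not]
      exact ⟨fun h => ⟨h.1, h.2 (hBT h.1)⟩, fun h => ⟨h.1, fun _ => h.2⟩⟩
    have hrank := hB.encard_le_encard_sdiff_add_encard hBT hI hJ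
    rw [hBc, ← (hfin hI.indep.subset_ground).cast_ncard_eq,
      ← (hfin hJ.indep.subset_ground).cast_ncard_eq,
      ← (hfin (inter_subset_left.trans hB.subset_ground)).cast_ncard_eq, ← Nat.cast_add,
      Nat.cast_le] at hrank
    omega
  · obtain ⟨T, hBT, hTE, hTcard, hTc⟩ :=
      hB.exists_superset_courteouslyColored_restrict col hc (hfin hB.subset_ground)
    refine ⟨T, hBT, hTE, ?_, hTc, B, (hB.isBasis_of_subset hTE hBT).isBase_restrict, hBr⟩
    rw [← (hfin hTE).cast_ncard_eq, ← (hfin hB.subset_ground).cast_ncard_eq, hBr] at hTcard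
    exact_mod_cast hTcard
end

section
/- If v is a cut-vertex in a vertex-color-avoiding connected graph G, then at most one connected component of G - v contains a vertex whose color differs from the color of v. -/
/-- The spanning subgraph obtained from `G` by removing all edges of color `c`. -/
def SimpleGraph.deleteColor {V C : Type*} (G : SimpleGraph V) (col : Sym2 V → C) (c : C) :
    SimpleGraph V :=
  G.deleteEdges {e | col e = c}

/-- An edge-colored graph is edge-color-avoiding connected if after removing the edges of any
single color it remains connected. -/
def EdgeColorAvoidingConnected {V C : Type*} (G : SimpleGraph V) (col : Sym2 V → C) : Prop :=
  ∀ c : C, (G.deleteColor col c).Connected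

/-- Vertices `u` and `v` are vertex-`c`-avoiding connected: there is a `u`-`v` walk, and either
one of `u`, `v` has color `c`, or some `u`-`v` walk contains no vertex of color `c`. -/
def VertexCAvoidingConnected {V C : Type*} (G : SimpleGraph V) (col : V → C) (c : C)
    (u v : V) : Prop :=
  G.Reachable u v ∧
    (col u = c ∨ col v = c ∨ ∃ p : G.Walk u v, ∀ w ∈ p.support, col w ≠ c)

/-- A vertex-colored graph is vertex-color-avoiding connected if any two vertices are
vertex-`c`-avoiding connected for every color `c`. -/
def VertexColorAvoidingConnected {V C : Type*} (G : SimpleGraph V) (col : V → C) : Prop :=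
  ∀ (c : C) (u v : V), VertexCAvoidingConnected G col c u v

/-- Vertices `u` and `v` are internally vertex-`c`-avoiding connected: there is a `u`-`v` walk
containing no internal vertices of color `c`. -/
def InternallyVertexCAvoidingConnected {V C : Type*} (G : SimpleGraph V) (col : V → C) (c : C)
    (u v : V) : Prop :=
  ∃ p : G.Walk u v, ∀ w ∈ p.support, w ≠ u → w ≠ v → col w ≠ c

/-- A vertex-colored graph is internally vertex-color-avoiding connected if any two vertices are
internally vertex-`c`-avoiding connected for every color `c`. -/
def InternallyVertexColorAvoidingConnected {V C : Type*} (G : SimpleGraph V) (col : V → C) :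
    Prop :=
  ∀ (c : C) (u v : V), InternallyVertexCAvoidingConnected G col c u v

theorem stmt10_general {V C : Type*} (G : SimpleGraph V) (col : V → C)
    (h : VertexColorAvoidingConnected G col) (v : V)
    (a b : {u : V | u ≠ v}) (ha : col ↑a ≠ col v) (hb : col ↑b ≠ col v) :
    (G.induce {u : V | u ≠ v}).Reachable a b := by
  obtain ⟨-, ha' | hb' | ⟨p, hp⟩⟩ := h (col v) a b
  · exact absurd ha' ha
  · exact absurd hb' hb
  · exact ⟨p.induce {u | u ≠ v} fun w hw hwv => hp w hw (congrArg col hwv)⟩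

/-- If `v` is a cut-vertex of a vertex-color-avoiding connected graph `G`, then at most one
connected component of `G - v` contains a vertex whose color differs from the color of `v`
(i.e. any two such vertices are connected in `G - v`). -/
theorem stmt10 {V C : Type*} (G : SimpleGraph V) (col : V → C)
    (h : VertexColorAvoidingConnected G col) (v : V)
    (hconn : G.Connected) (hcut : ¬ (G.induce {u : V | u ≠ v}).Connected)
    (a b : {u : V | u ≠ v}) (ha : col ↑a ≠ col v) (hb : col ↑b ≠ col v) :
    (G.induce {u : V | u ≠ v}).Reachable a b :=
  stmt10_general G col h v a b ha hb
end

section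
/- Every vertex-color-avoiding connected graph on n vertices whose vertices are colored with exactly k ≥ 3 colors has at least n edges. -/
/-!
A connected graph on `n` vertices has at least `n - 1` edges, with equality only for trees, so it
suffices to show that a vertex-color-avoiding connected graph with at least three colors is not a
tree. In a tree every edge `uv` is a bridge; if `col u ≠ col v` and `x` has a third color, then
either every `x`-`u` walk passes through `v`, or every `x`-`v` walk passes through `u`. Both
contradict color-avoiding connectivity, for the colors of `v` and of `u` respectively.
-/

namespace SimpleGraph

variable {V : Type*} {G : SimpleGraph V}

theorem Walk.exists_adj_ne_of_ne {α : Type*} {a b : V} (p : G.Walk a b) (f : V → α)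
    (hab : f a ≠ f b) : ∃ u v, G.Adj u v ∧ f u ≠ f v := by
  obtain ⟨d, -, hd, hd'⟩ := p.exists_boundary_dart {w | f w = f a} rfl hab.symm
  exact ⟨d.fst, d.snd, d.adj, fun h ↦ hd' (h.symm.trans hd)⟩

theorem IsBridge.forall_walk_mem_support_or {u v : V} (hb : G.IsBridge s(u, v)) (x : V) :
    (∀ p : G.Walk x u, v ∈ p.support) ∨ (∀ p : G.Walk x v, u ∈ p.support) := by
  by_contra! ⟨⟨p, hp⟩, ⟨q, hq⟩⟩
  have hmem := isBridge_iff_forall_walk_mem_edges.mp hb (p.reverse.append q)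
  rw [Walk.edges_append, Walk.edges_reverse, List.mem_append, List.mem_reverse] at hmem
  rcases hmem with hmem | hmem
  · exact hp (p.snd_mem_support_of_mem_edges hmem)
  · exact hq (q.fst_mem_support_of_mem_edges hmem)

end SimpleGraph

namespace VertexColorAvoidingConnected

open SimpleGraph

variable {V C : Type*} {G : SimpleGraph V} {col : V → C}

theorem connected [Nonempty V] (h : VertexColorAvoidingConnected G col) : G.Connected :=
  .mk fun u v ↦ (h (col u) u v).1

theorem exists_walk_forall_ne (h : VertexColorAvoidingConnected G col) {c : C} {x y : V}
    (hx : col x ≠ c) (hy : col y ≠ c) : ∃ p : G.Walk x y, ∀ w ∈ p.support, col w ≠ c :=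
  ((h c x y).2.resolve_left hx).resolve_left hy

theorem not_isBridge (h : VertexColorAvoidingConnected G col) {u v x : V}
    (huv : col u ≠ col v) (hxu : col x ≠ col u) (hxv : col x ≠ col v) :
    ¬ G.IsBridge s(u, v) := by
  intro hb
  rcases hb.forall_walk_mem_support_or x with hv | hu
  · obtain ⟨p, hp⟩ := h.exists_walk_forall_ne hxv huv
    exact hp v (hv p) rfl
  · obtain ⟨p, hp⟩ := h.exists_walk_forall_ne hxu huv.symm
    exact hp u (hu p) rfl

theorem not_isAcyclic (h : VertexColorAvoidingConnected G col)
    (hcol : 2 < (Set.range col).ncard) : ¬ G.IsAcyclic := by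
  have hfin : (Set.range col).Finite := Set.finite_of_ncard_pos (by omega)
  obtain ⟨-, -, ⟨a, rfl⟩, ⟨b, rfl⟩, hab⟩ := (Set.one_lt_ncard_iff hfin).mp (by omega)
  obtain ⟨u, v, hadj, huv⟩ := ((h (col a) a b).1.some).exists_adj_ne_of_ne col hab
  have hpair : ({col u, col v} : Set C).ncard < (Set.range col).ncard :=
    (Set.ncard_pair huv).trans_lt hcol
  obtain ⟨-, ⟨x, rfl⟩, hx⟩ := Set.exists_mem_notMem_of_ncard_lt_ncard hpair
  simp only [Set.mem_insert_iff, Set.mem_singleton_iff, not_or] at hx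
  intro hG
  exact h.not_isBridge huv hx.1 hx.2 (isAcyclic_iff_forall_adj_isBridge.mp hG hadj)

end VertexColorAvoidingConnected

/-- Every vertex-color-avoiding connected graph on `n` vertices whose vertices are colored with
exactly `k ≥ 3` colors has at least `n` edges. -/
theorem stmt11 {V C : Type*} [Fintype V] (G : SimpleGraph V) (col : V → C) (k : ℕ)
    (hk : 3 ≤ k) (hcols : (Set.range col).ncard = k)
    (h : VertexColorAvoidingConnected G col) :
    Fintype.card V ≤ G.edgeSet.ncard := by
  have hcol : 2 < (Set.range col).ncard := by omega
  have : Nonempty V :=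
    Set.range_nonempty_iff_nonempty.mp (Set.nonempty_of_ncard_ne_zero (Nat.ne_zero_of_lt hcol))
  have hconn := h.connected
  have hnot_tree : Nat.card G.edgeSet + 1 ≠ Nat.card V := fun heq ↦
    h.not_isAcyclic hcol (SimpleGraph.isTree_iff_connected_and_card.mpr ⟨hconn, heq⟩).isAcyclic
  have hle := hconn.card_vert_le_card_edgeSet_add_one
  rw [Nat.card_coe_set_eq, Nat.card_eq_fintype_card] at hle hnot_tree
  omega
end

section
/- For all n ≥ k ≥ 3, the n-cycle v_1 v_2 ... v_n with vertex v_i colored i for i ≤ k and colored k for i > k is vertex-color-avoiding connected; hence the minimum number of edges of a vertex-color-avoiding connected graph on n vertices colored with exactly k ≥ 3 colors equals n. -/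
/-!
A vertex-color-avoiding connected graph is connected, so it has at least `n - 1` edges, and with
exactly `n - 1` edges it is a tree. In a tree, three vertices `x`, `y`, `z` of distinct colors have
a median `t`, lying on every walk between any two of them. The color of `t` is the color of at most
one of `x`, `y`, `z`, so the other two cannot be joined avoiding the color of `t`.

In the colored cycle, a color `c < k - 1` is carried by the single vertex `c`, which is avoided by
going around the other side of the cycle; every other color is avoided by the arc between the two
endpoints, as all vertices of color `k - 1` lie beyond both of them.
-/

open SimpleGraph

namespace SimpleGraph

variable {V : Type*} {G : SimpleGraph V} {u v w : V}

theorem Walk.IsPath.append {p : G.Walk u v} {q : G.Walk v w} (hp : p.IsPath) (hq : q.IsPath)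
    (h : ∀ x ∈ p.support, x ∈ q.support → x = v) : (p.append q).IsPath := by
  rw [Walk.isPath_def, Walk.support_append, List.nodup_append]
  refine ⟨hp.support_nodup, hq.support_nodup.sublist q.support.tail_sublist, ?_⟩
  intro x hxp y hyq hxy
  subst hxy
  have hx : x = v := h x hxp (List.mem_of_mem_tail hyq)
  subst hx
  exact (List.nodup_cons.1 (q.cons_tail_support ▸ hq.support_nodup)).1 hyq

theorem IsAcyclic.mem_support_of_isPath (hG : G.IsAcyclic) {P : G.Walk u v} (hP : P.IsPath)
    {t : V} (ht : t ∈ P.support) (q : G.Walk u v) : t ∈ q.support := by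
  classical
  have hq : q.bypass = P :=
    congrArg Subtype.val ((hG.subsingleton_path u v).elim ⟨_, q.bypass_isPath⟩ ⟨P, hP⟩)
  exact q.support_bypass_subset_support (hq ▸ ht)

theorem IsAcyclic.exists_median (hG : G.IsAcyclic) {x y z : V} (hxy : G.Reachable x y)
    (hzx : G.Reachable z x) :
    ∃ t, (∀ p : G.Walk x y, t ∈ p.support) ∧ (∀ p : G.Walk z x, t ∈ p.support) ∧
      ∀ p : G.Walk z y, t ∈ p.support := by
  classical
  obtain ⟨P, hP⟩ := hxy.exists_isPath
  obtain ⟨Q, hQ⟩ := hzx.exists_isPath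
  -- `t` is the first vertex of `Q` on `P`
  obtain ⟨t, htP, htQ, hfirst⟩ := Q.exists_mem_support_forall_mem_support_imp_eq
    P.support.toFinset ⟨x, by simp⟩
  rw [List.mem_toFinset] at htP
  have hR := hQ.takeUntil htQ
  have hzx' : ((Q.takeUntil t htQ).append (P.takeUntil t htP).reverse).IsPath := by
    refine hR.append (hP.takeUntil htP).reverse fun s hsQ hsP => hfirst s ?_ hsQ
    rw [Walk.support_reverse, List.mem_reverse] at hsP
    exact List.mem_toFinset.2 (P.support_takeUntil_subset_support htP hsP)
  have hzy' : ((Q.takeUntil t htQ).append (P.dropUntil t htP)).IsPath :=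
    hR.append (hP.dropUntil htP) fun s hsQ hsP =>
      hfirst s (List.mem_toFinset.2 (P.support_dropUntil_subset_support htP hsP)) hsQ
  exact ⟨t, hG.mem_support_of_isPath hP htP, hG.mem_support_of_isPath hzx' (by simp),
    hG.mem_support_of_isPath hzy' (by simp)⟩

theorem pathGraph_exists_walk_support_Icc {n : ℕ} {a b : Fin n} (hab : a ≤ b) :
    ∃ p : (pathGraph n).Walk a b, ∀ w ∈ p.support, a ≤ w ∧ w ≤ b := by
  obtain ⟨d, hd⟩ : ∃ d, b.val = a.val + d := ⟨b - a, by omega⟩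
  induction d generalizing b with
  | zero =>
    obtain rfl : a = b := Fin.ext (by omega)
    exact ⟨.nil, by simp⟩
  | succ d ih =>
    obtain ⟨p, hp⟩ := ih (b := ⟨a + d, by omega⟩) (Fin.le_def.2 (by simp)) rfl
    refine ⟨p.concat (pathGraph_adj.2 (.inl (by simp [hd]; omega))), fun w hw => ?_⟩
    rw [Walk.support_concat, List.mem_append, List.mem_singleton] at hw
    rcases hw with hw | rfl
    · have := hp w hw
      simp only [Fin.le_def] at this ⊢
      omega
    · exact ⟨hab, le_rfl⟩

theorem cycleGraph_adj_zero_last (n : ℕ) : (cycleGraph (n + 2)).Adj 0 (Fin.last (n + 1)) := by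
  simp [cycleGraph_adj]

theorem cycleGraph_edgeSet_ncard {n : ℕ} (hn : 3 ≤ n) : (cycleGraph n).edgeSet.ncard = n := by
  obtain ⟨n, rfl⟩ : ∃ m, n = m + 3 := ⟨n - 3, by omega⟩
  classical
  have hdeg := sum_degrees_eq_twice_card_edges (cycleGraph (n + 3))
  simp only [cycleGraph_degree_three_le, Finset.sum_const, Finset.card_univ, Fintype.card_fin,
    smul_eq_mul] at hdeg
  rw [← coe_edgeFinset, Set.ncard_coe_finset]
  omega

theorem cycleGraph_exists_walk_support_between {n : ℕ} (a b : Fin n) :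
    ∃ p : (cycleGraph n).Walk a b, ∀ w ∈ p.support, min a b ≤ w ∧ w ≤ max a b := by
  rcases le_total a b with hab | hba
  · obtain ⟨p, hp⟩ := pathGraph_exists_walk_support_Icc hab
    refine ⟨p.mapLe pathGraph_le_cycleGraph, fun w hw => ?_⟩
    rw [Walk.support_mapLe_eq_support] at hw
    simpa [hab] using hp w hw
  · obtain ⟨p, hp⟩ := pathGraph_exists_walk_support_Icc hba
    refine ⟨(p.mapLe pathGraph_le_cycleGraph).reverse, fun w hw => ?_⟩
    rw [Walk.support_reverse, List.mem_reverse, Walk.support_mapLe_eq_support] at hw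
    simpa [hba] using hp w hw

theorem cycleGraph_exists_walk_not_mem_support_of_lt_of_lt {n : ℕ} {u v c : Fin n} (hu : u < c)
    (hv : c < v) : ∃ p : (cycleGraph n).Walk u v, c ∉ p.support := by
  obtain ⟨n, rfl⟩ : ∃ m, n = m + 2 := ⟨n - 2, by omega⟩
  obtain ⟨p, hp⟩ := cycleGraph_exists_walk_support_between u 0
  obtain ⟨q, hq⟩ := cycleGraph_exists_walk_support_between (Fin.last (n + 1)) v
  refine ⟨p.append (.cons (cycleGraph_adj_zero_last n) q), fun hc => ?_⟩
  rw [Walk.mem_support_append_iff, Walk.support_cons, List.mem_cons] at hc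
  rcases hc with hc | rfl | hc
  · exact ((hp c hc).2.trans_eq (max_eq_left (Fin.zero_le u))).not_gt hu
  · exact Fin.not_lt_zero _ hu
  · exact ((min_eq_right (Fin.le_last v)).symm.trans_le (hq c hc).1).not_gt hv

theorem cycleGraph_exists_walk_not_mem_support {n : ℕ} {u v c : Fin n} (hu : u ≠ c)
    (hv : v ≠ c) : ∃ p : (cycleGraph n).Walk u v, c ∉ p.support := by
  rcases hu.lt_or_gt with hu | hu <;> rcases hv.lt_or_gt with hv | hv
  · obtain ⟨p, hp⟩ := cycleGraph_exists_walk_support_between u v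
    exact ⟨p, fun hc => (hp c hc).2.not_gt (max_lt hu hv)⟩
  · exact cycleGraph_exists_walk_not_mem_support_of_lt_of_lt hu hv
  · obtain ⟨p, hp⟩ := cycleGraph_exists_walk_not_mem_support_of_lt_of_lt hv hu
    exact ⟨p.reverse, by simpa using hp⟩
  · obtain ⟨p, hp⟩ := cycleGraph_exists_walk_support_between u v
    exact ⟨p, fun hc => (hp c hc).1.not_gt (lt_min hu hv)⟩

end SimpleGraph

theorem cycleGraph_vertexColorAvoidingConnected_min_val (n K : ℕ) :
    VertexColorAvoidingConnected (cycleGraph n) (fun i : Fin n => min i.val K) := by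
  intro c u v
  refine ⟨cycleGraph_preconnected u v, ?_⟩
  by_cases hu : min u.val K = c
  · exact .inl hu
  by_cases hv : min v.val K = c
  · exact .inr (.inl hv)
  refine .inr (.inr ?_)
  by_cases hc : c < K ∧ c < n
  · -- the only vertex of color `c` is `c` itself
    obtain ⟨p, hp⟩ := cycleGraph_exists_walk_not_mem_support (c := ⟨c, hc.2⟩)
      (u := u) (v := v) (fun h => hu (by rw [h]; exact min_eq_left hc.1.le))
      (fun h => hv (by rw [h]; exact min_eq_left hc.1.le))
    refine ⟨p, fun w hw hwc => hp ?_⟩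
    obtain rfl : w = ⟨c, hc.2⟩ := Fin.ext (show w.val = c by simp only at hwc; omega)
    exact hw
  · obtain ⟨p, hp⟩ := cycleGraph_exists_walk_support_between u v
    refine ⟨p, fun w hw => ?_⟩
    have := hp w hw
    simp only [Fin.le_def, Fin.coe_min, Fin.coe_max] at this ⊢
    omega

theorem ncard_range_min_val {n K : ℕ} (hK : K < n) :
    (Set.range fun i : Fin n => min i.val K).ncard = K + 1 := by
  have hrange : (Set.range fun i : Fin n => min i.val K) = ↑(Finset.range (K + 1)) := by
    ext j
    simp only [Set.mem_range, Finset.coe_range, Set.mem_Iio]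
    refine ⟨by rintro ⟨i, rfl⟩; omega, fun hj => ⟨⟨j, by omega⟩, by simp only; omega⟩⟩
  rw [hrange, Set.ncard_coe_finset, Finset.card_range]

namespace VertexColorAvoidingConnected

variable {V C : Type*} {G : SimpleGraph V} {col : V → C}

theorem not_forall_mem_support (h : VertexColorAvoidingConnected G col) {a b t : V}
    (ha : col a ≠ col t) (hb : col b ≠ col t) : ¬∀ p : G.Walk a b, t ∈ p.support := fun ht =>
  let ⟨p, hp⟩ := ((h (col t) a b).2.resolve_left ha).resolve_left hb
  hp t (ht p) rfl

theorem not_isAcyclic_s12 (h : VertexColorAvoidingConnected G col) {x y z : V}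
    (hxy : col x ≠ col y) (hxz : col x ≠ col z) (hyz : col y ≠ col z) : ¬G.IsAcyclic := by
  intro hG
  obtain ⟨t, htxy, htzx, htzy⟩ := hG.exists_median (h (col x) x y).1 (h (col x) z x).1
  by_cases htx : col t = col x
  · exact h.not_forall_mem_support (htx ▸ hxz.symm) (htx ▸ hxy.symm) htzy
  by_cases hty : col t = col y
  · exact h.not_forall_mem_support (hty ▸ hyz.symm) (hty ▸ hxy) htzx
  · exact h.not_forall_mem_support (Ne.symm htx) (Ne.symm hty) htxy

theorem card_le_ncard_edgeSet [Finite V] (h : VertexColorAvoidingConnected G col)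
    (hcol : 2 < (Set.range col).ncard) : Nat.card V ≤ G.edgeSet.ncard := by
  obtain ⟨_, ⟨x, rfl⟩, _, ⟨y, rfl⟩, _, ⟨z, rfl⟩, hxy, hxz, hyz⟩ :=
    (Set.two_lt_ncard (Set.finite_range col)).1 hcol
  have : Nonempty V := ⟨x⟩
  have hG : G.Connected := ⟨fun a b => (h (col x) a b).1⟩
  have hlow := hG.card_vert_le_card_edgeSet_add_one
  rw [Nat.card_coe_set_eq] at hlow
  by_contra! hlt
  have hT : G.IsTree := isTree_iff_connected_and_card.2 ⟨hG, by rw [Nat.card_coe_set_eq]; omega⟩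
  exact h.not_isAcyclic_s12 hxy hxz hyz hT.isAcyclic

end VertexColorAvoidingConnected

/-- For all `n ≥ k ≥ 3`, the `n`-cycle with vertex `v_i` colored `min i (k-1)` (i.e. colored
`i` for the first `k-1` vertices and with the last color afterwards) is vertex-color-avoiding
connected, uses exactly `k` colors and has `n` edges; hence, the minimum number of edges of a
vertex-color-avoiding connected graph on `n` vertices colored with exactly `k ≥ 3` colors
equals `n`. -/
theorem stmt12 (n k : ℕ) (hk : 3 ≤ k) (hkn : k ≤ n) :
    (VertexColorAvoidingConnected (SimpleGraph.cycleGraph n)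
        (fun i : Fin n => min i.val (k - 1)) ∧
      (Set.range fun i : Fin n => min i.val (k - 1)).ncard = k ∧
      (SimpleGraph.cycleGraph n).edgeSet.ncard = n) ∧
    ∀ (V C : Type) [Fintype V], Fintype.card V = n →
      ∀ (G : SimpleGraph V) (col : V → C), (Set.range col).ncard = k →
        VertexColorAvoidingConnected G col → n ≤ G.edgeSet.ncard := by
  refine ⟨⟨cycleGraph_vertexColorAvoidingConnected_min_val n (k - 1), ?_,
    cycleGraph_edgeSet_ncard (hk.trans hkn)⟩, ?_⟩
  · rw [ncard_range_min_val (by omega)]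
    omega
  · intro V C _ hV G col hcol h
    rw [← hV, ← Nat.card_eq_fintype_card]
    exact h.card_le_ncard_edgeSet (by omega)
end

section
/- Let G be an internally vertex-color-avoiding connected graph on n vertices colored with exactly k ≥ 2 colors, and let x be the number of edges of G whose two endpoints have the same color. Then (k-2)·|E(G)| ≥ (k-1)n - k - x. -/
/-!
Deleting the vertices of one color `c` leaves a connected graph on `n - n_c` vertices, which
therefore keeps at least `n - n_c - 1` edges. Summed over the `k` colors this gives at least
`k n - n - k` edges, counted with multiplicity. Counted edge by edge, the same sum is
`(k - 2) |E| + x`: an edge survives the deletion of every color except those of its endpoints,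
so it is counted `k - 1` times if monochromatic and `k - 2` times otherwise.
-/

open Finset SimpleGraph

lemma Sym2.forall_eq_mk_imp_iff_isDiag_map {α β : Type*} (f : α → β) (e : Sym2 α) :
    (∀ u v, e = s(u, v) → f u = f v) ↔ (e.map f).IsDiag := by
  induction e using Sym2.ind with
  | _ a b =>
  refine ⟨fun h => h a b rfl, fun h u v huv => ?_⟩
  rcases Sym2.eq_iff.1 huv with ⟨rfl, rfl⟩ | ⟨rfl, rfl⟩
  exacts [h, h.symm]

lemma Finset.card_filter_notMem_sym2 {α : Type*} [DecidableEq α] (R : Finset α) (z : Sym2 α)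
    (hz : ∀ a ∈ z, a ∈ R) :
    (#{c ∈ R | c ∉ z} : ℤ) = #R - 2 + if z.IsDiag then 1 else 0 := by
  have hsub : z.toFinset ⊆ R := fun a ha => hz a (Sym2.mem_toFinset.1 ha)
  have hfilter : {c ∈ R | c ∉ z} = R \ z.toFinset := by
    ext c
    simp [Sym2.mem_toFinset]
  rw [hfilter, card_sdiff_of_subset hsub, Nat.cast_sub (card_le_card hsub), Sym2.card_toFinset]
  split_ifs <;> push_cast <;> ring

lemma sum_card_filter_notMem_map_eq {V C : Type*} [DecidableEq V] [DecidableEq C]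
    (col : V → C) (R : Finset C) (hR : ∀ v, col v ∈ R) (E : Finset (Sym2 V)) :
    (∑ c ∈ R, #{e ∈ E | c ∉ e.map col} : ℤ) =
      (#R - 2) * #E + #{e ∈ E | (e.map col).IsDiag} := by
  have hswap : ∑ c ∈ R, #{e ∈ E | c ∉ e.map col} = ∑ e ∈ E, #{c ∈ R | c ∉ e.map col} :=
    sum_card_bipartiteAbove_eq_sum_card_bipartiteBelow _
  have hmem (e : Sym2 V) : ∀ c ∈ e.map col, c ∈ R := by
    intro c hc
    obtain ⟨v, -, rfl⟩ := Sym2.mem_map.1 hc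
    exact hR v
  rw [← Nat.cast_sum, hswap, Nat.cast_sum,
    sum_congr rfl fun e _ => card_filter_notMem_sym2 R (e.map col) (hmem e), sum_add_distrib,
    sum_const, sum_boole, nsmul_eq_mul, mul_comm]

namespace SimpleGraph

variable {V : Type*} {G : SimpleGraph V}

lemma card_le_card_edgeFinset_filter_add_one [Fintype V] [DecidableEq V] [DecidableRel G.Adj]
    (s : Finset V) (hs : (G.induce (s : Set V)).Preconnected) :
    #s ≤ #{e ∈ G.edgeFinset | ∀ v ∈ e, v ∈ s} + 1 := by
  rcases s.eq_empty_or_nonempty with rfl | ⟨v, hv⟩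
  · simp
  have : Nonempty (s : Set V) := ⟨⟨v, hv⟩⟩
  have hconn := (Connected.mk hs).card_vert_le_card_edgeSet_add_one
  rw [Nat.card_coe_set_eq, Set.ncard_coe_finset, Nat.card_eq_fintype_card, card_edgeSet] at hconn
  refine hconn.trans (Nat.add_le_add_right (card_le_card_of_injOn (Sym2.map (↑)) ?_ ?_) 1)
  · intro e he
    induction e using Sym2.ind
    simp_all
  · exact (Sym2.map.injective Subtype.val_injective).injOn

end SimpleGraph

section Coloring

variable {V C : Type*} {G : SimpleGraph V} {col : V → C}

lemma preconnected_induce_of_internallyVertexCAvoidingConnected {c : C}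
    (h : ∀ u v, InternallyVertexCAvoidingConnected G col c u v) :
    (G.induce {v | col v ≠ c}).Preconnected := by
  rintro ⟨u, hu⟩ ⟨v, hv⟩
  obtain ⟨p, hp⟩ := h u v
  refine ⟨p.induce _ fun w hw => ?_⟩
  by_cases hwu : w = u
  · exact hwu ▸ hu
  by_cases hwv : w = v
  · exact hwv ▸ hv
  exact hp w hw hwu hwv

lemma card_sub_card_fiber_sub_one_le_card_avoiding [Fintype V] [DecidableEq V]
    [DecidableRel G.Adj] [DecidableEq C] {c : C}
    (h : ∀ u v, InternallyVertexCAvoidingConnected G col c u v) :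
    (Fintype.card V : ℤ) - #{v | col v = c} - 1 ≤ #{e ∈ G.edgeFinset | c ∉ e.map col} := by
  have hs := G.card_le_card_edgeFinset_filter_add_one {v | col v ≠ c} (by
    rw [coe_filter_univ]
    exact preconnected_induce_of_internallyVertexCAvoidingConnected h)
  have hsplit := card_filter_add_card_filter_not (s := univ) (fun v => col v = c)
  simp only [mem_filter, mem_univ, true_and, Sym2.mem_map, ne_eq, not_exists, not_and] at hs ⊢
  rw [card_univ] at hsplit
  omega

lemma InternallyVertexColorAvoidingConnected.card_mul_sub_le_sum [Fintype V] [DecidableEq V]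
    [DecidableRel G.Adj] [DecidableEq C] (h : InternallyVertexColorAvoidingConnected G col) :
    (#(univ.image col) * Fintype.card V - Fintype.card V - #(univ.image col) : ℤ) ≤
      ∑ c ∈ univ.image col, (#{e ∈ G.edgeFinset | c ∉ e.map col} : ℤ) := by
  have hfibers : ∑ c ∈ univ.image col, (#{v | col v = c} : ℤ) = Fintype.card V := by
    rw [← card_univ]
    exact_mod_cast (card_eq_sum_card_image col univ).symm
  calc _ = ∑ c ∈ univ.image col, ((Fintype.card V : ℤ) - #{v | col v = c} - 1) := by
        rw [sum_sub_distrib, sum_sub_distrib, hfibers]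
        simp only [sum_const, nsmul_eq_mul, mul_one]
    _ ≤ _ := sum_le_sum fun c _ => card_sub_card_fiber_sub_one_le_card_avoiding (h c)

end Coloring

theorem stmt14_general {V C : Type*} [Fintype V] (G : SimpleGraph V) (col : V → C) (k : ℕ)
    (hcols : (Set.range col).ncard = k)
    (h : InternallyVertexColorAvoidingConnected G col)
    (x : ℕ) (hx : x = {e ∈ G.edgeSet | ∀ u v : V, e = s(u, v) → col u = col v}.ncard) :
    ((k : ℤ) - 1) * Fintype.card V - k - x ≤ ((k : ℤ) - 2) * G.edgeSet.ncard := by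
  classical
  have hcard : #(univ.image col) = k := by
    rw [← hcols, ← Set.ncard_coe_finset, coe_image, coe_univ, Set.image_univ]
  have hE : G.edgeSet.ncard = #G.edgeFinset := by
    rw [← coe_edgeFinset, Set.ncard_coe_finset]
  have hx' : x = #{e ∈ G.edgeFinset | (e.map col).IsDiag} := by
    simp_rw [hx, Sym2.forall_eq_mk_imp_iff_isDiag_map, ← Set.ncard_coe_finset, coe_filter,
      mem_edgeFinset]
  have hsum := sum_card_filter_notMem_map_eq col (univ.image col) (by simp) G.edgeFinset
  have hlower := h.card_mul_sub_le_sum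
  rw [hE, hx', ← hcard]
  linarith

/-- First counting bound: if `G` is internally vertex-color-avoiding connected on `n` vertices
with exactly `k ≥ 2` colors, and `x` is the number of edges whose two endpoints have the same
color, then `(k-2)·|E(G)| ≥ (k-1)·n - k - x`. -/
theorem stmt14 {V C : Type*} [Fintype V] (G : SimpleGraph V) (col : V → C) (k : ℕ)
    (hk : 2 ≤ k) (hcols : (Set.range col).ncard = k)
    (h : InternallyVertexColorAvoidingConnected G col)
    (x : ℕ) (hx : x = {e ∈ G.edgeSet | ∀ u v : V, e = s(u, v) → col u = col v}.ncard) :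
    ((k : ℤ) - 1) * Fintype.card V - k - x ≤ ((k : ℤ) - 2) * G.edgeSet.ncard :=
  stmt14_general G col k hcols h x hx
end

section
/- Let G be an internally vertex-color-avoiding connected graph on n vertices colored with exactly k ≥ 2 colors, and let x be the number of edges of G whose two endpoints have the same color. Then k·|E(G)| ≥ k·n - k + x. -/
/-!
Fix a color `c` that is used and a vertex `w` of another color. A `u`-`w` walk with no internal
vertex of color `c` meets color `c` at most in `u`, so it uses no edge with both ends of color `c`.
Hence deleting the edges of color `c` leaves `G` connected, so `n + x_c ≤ |E(G)| + 1`, where `x_c`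
counts the edges of color `c`. Summing over the `k` colors gives `k n + x ≤ k |E(G)| + k`.
-/

open SimpleGraph
open scoped Function

section

variable {V C : Type*}

def monochromaticEdges (col : V → C) (c : C) : Set (Sym2 V) :=
  {e | ∀ z ∈ e, col z = c}

lemma pairwise_disjoint_monochromaticEdges (col : V → C) :
    Pairwise (Disjoint on monochromaticEdges col) := by
  intro c d hcd
  refine Set.disjoint_left.mpr fun e hc hd => hcd ?_
  exact (hc _ e.out_fst_mem).symm.trans (hd _ e.out_fst_mem)

lemma setOf_sameColor_eq_biUnion_monochromaticEdges (col : V → C) :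
    {e : Sym2 V | ∀ u v, e = s(u, v) → col u = col v} =
      ⋃ c ∈ Set.range col, monochromaticEdges col c := by
  ext e
  induction e using Sym2.ind with
  | _ a b =>
    simp only [Set.mem_ofPred_eq, Sym2.eq, Sym2.rel_iff', Prod.mk.injEq, Prod.swap_prod_mk,
      Set.mem_range, monochromaticEdges, Set.iUnion_exists, Set.iUnion_iUnion_eq', Set.mem_iUnion,
      Sym2.mem_iff, forall_eq_or_imp, forall_eq]
    constructor
    · exact fun hsame => ⟨a, rfl, (hsame a b (Or.inl ⟨rfl, rfl⟩)).symm⟩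
    · rintro ⟨w, ha, hb⟩ u v (⟨rfl, rfl⟩ | ⟨rfl, rfl⟩)
      · exact ha.trans hb.symm
      · exact hb.trans ha.symm

lemma ncard_sameColor_edgeSet_eq_finsum [Finite V] (G : SimpleGraph V) (col : V → C) :
    {e ∈ G.edgeSet | ∀ u v : V, e = s(u, v) → col u = col v}.ncard =
      ∑ᶠ c ∈ Set.range col, (G.edgeSet ∩ monochromaticEdges col c).ncard := by
  rw [← Set.inter_ofPred_eq_sep, setOf_sameColor_eq_biUnion_monochromaticEdges,
    Set.inter_iUnion₂,
    (Set.finite_range col).ncard_biUnion (fun _ _ => Set.toFinite _)]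
  exact fun c _ d _ hcd =>
    ((pairwise_disjoint_monochromaticEdges col hcd).mono Set.inter_subset_right
      Set.inter_subset_right)

namespace InternallyVertexCAvoidingConnected

variable {G : SimpleGraph V} {col : V → C} {c : C} {u v : V}

lemma reachable_deleteEdges_monochromaticEdges
    (huv : InternallyVertexCAvoidingConnected G col c u v) (hv : col v ≠ c) :
    (G.deleteEdges (monochromaticEdges col c)).Reachable u v := by
  obtain ⟨p, hp⟩ := huv
  have hsupp : ∀ w ∈ p.support, w ≠ u → col w ≠ c := fun w hw hwu => by
    by_cases hwv : w = v
    · exact hwv ▸ hv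
    · exact hp w hw hwu hwv
  refine ⟨p.transfer _ fun e he => ?_⟩
  rw [edgeSet_deleteEdges]
  refine ⟨p.edges_subset_edgeSet he, ?_⟩
  induction e using Sym2.ind with
  | _ a b =>
    intro hmono
    have hab : a ≠ b := G.ne_of_adj (p.adj_of_mem_edges he)
    by_cases ha : a = u
    · exact hsupp b (p.snd_mem_support_of_mem_edges he) (ha ▸ hab.symm)
        (hmono b (Sym2.mem_mk_right a b))
    · exact hsupp a (p.fst_mem_support_of_mem_edges he) ha (hmono a (Sym2.mem_mk_left a b))

end InternallyVertexCAvoidingConnected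

namespace InternallyVertexColorAvoidingConnected

variable {G : SimpleGraph V} {col : V → C} {c : C} {w : V}

lemma connected_deleteEdges_monochromaticEdges (h : InternallyVertexColorAvoidingConnected G col)
    (hw : col w ≠ c) : (G.deleteEdges (monochromaticEdges col c)).Connected :=
  (connected_iff_exists_forall_reachable _).mpr
    ⟨w, fun u => ((h c u w).reachable_deleteEdges_monochromaticEdges hw).symm⟩

lemma card_add_ncard_monochromaticEdges_le [Finite V]
    (h : InternallyVertexColorAvoidingConnected G col) (hw : col w ≠ c) :
    Nat.card V + (G.edgeSet ∩ monochromaticEdges col c).ncard ≤ G.edgeSet.ncard + 1 := by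
  have hconn := (h.connected_deleteEdges_monochromaticEdges hw).card_vert_le_card_edgeSet_add_one
  rw [Nat.card_coe_set_eq, edgeSet_deleteEdges] at hconn
  have hsplit := Set.ncard_inter_add_ncard_sdiff_eq_ncard G.edgeSet (monochromaticEdges col c)
  omega

end InternallyVertexColorAvoidingConnected

end

/-- Second counting bound: if `G` is internally vertex-color-avoiding connected on `n` vertices
with exactly `k ≥ 2` colors, and `x` is the number of edges whose two endpoints have the same
color, then `k·|E(G)| ≥ k·n - k + x`. -/
theorem stmt15 {V C : Type*} [Fintype V] (G : SimpleGraph V) (col : V → C) (k : ℕ)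
    (hk : 2 ≤ k) (hcols : (Set.range col).ncard = k)
    (h : InternallyVertexColorAvoidingConnected G col)
    (x : ℕ) (hx : x = {e ∈ G.edgeSet | ∀ u v : V, e = s(u, v) → col u = col v}.ncard) :
    (k : ℤ) * Fintype.card V - k + x ≤ (k : ℤ) * G.edgeSet.ncard := by
  classical
  set colors := (Set.range col).toFinset
  have hcolors : colors.card = k := by rw [← Set.ncard_eq_toFinset_card', hcols]
  have hbound : ∀ c ∈ colors,
      Nat.card V + (G.edgeSet ∩ monochromaticEdges col c).ncard ≤ G.edgeSet.ncard + 1 := by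
    intro c _
    obtain ⟨_, ⟨w, rfl⟩, hw⟩ := (Set.range col).exists_ne_of_one_lt_ncard (by omega) c
    exact h.card_add_ncard_monochromaticEdges_le hw
  have hsum := Finset.sum_le_sum hbound
  rw [Finset.sum_add_distrib, Finset.sum_add_distrib] at hsum
  simp only [Finset.sum_const, hcolors, smul_eq_mul, Nat.card_eq_fintype_card, mul_one] at hsum
  rw [hx, ncard_sameColor_edgeSet_eq_finsum, finsum_mem_eq_toFinset_sum]
  push_cast
  linarith
end

section
/- Every internally vertex-color-avoiding connected graph on n vertices colored with exactly k ≥ 2 colors has at least ⌈(2k-1)n/(2k-2) - k/(k-1)⌉ edges. -/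
/-!
Fix a color `c`, carried by `n_c` vertices. A walk without internal vertices of color `c` between
two vertices not colored `c` avoids `c` entirely, so the other `n - n_c` vertices induce a
connected subgraph and at least `n - n_c - 1` edges avoid `c`. Such a walk between vertices not
both colored `c` uses no edge with both ends colored `c`, and two `c`-vertices are joined through
a vertex of another color; so deleting the `m_c` edges with both ends colored `c` keeps `G`
connected, and `m - m_c ≥ n - 1`. An edge avoids exactly `k - 2 + [it is monochromatic]` colors,
so summing both bounds over the `k` colors and double counting gives
`(2k - 1) n ≤ (2k - 2) m + 2k`.

An edge `e` avoids `c` iff `c ∉ e.map col`, and is `c`-monochromatic iff `e.map col = s(c, c)`.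
-/

open Finset

namespace SimpleGraph

variable {V : Type*} [Fintype V] {G : SimpleGraph V} [DecidableRel G.Adj]

lemma card_le_card_edgeFinset_filter_add_one_of_connected_induce [DecidableEq V] {s : Finset V}
    (h : (G.induce (s : Set V)).Connected) :
    #s ≤ #{e ∈ G.edgeFinset | ∀ v ∈ e, v ∈ s} + 1 := by
  have hvert := h.card_vert_le_card_edgeSet_add_one
  let f : (G.induce (s : Set V)).edgeSet → {e ∈ G.edgeFinset | ∀ v ∈ e, v ∈ s} := fun e =>
    ⟨e.1.map Subtype.val, by
      obtain ⟨e, he⟩ := e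
      induction e with
      | _ a b => simpa [Sym2.mem_iff] using he⟩
  have hf : Function.Injective f := fun e e' hee' =>
    Subtype.ext (Sym2.map.injective Subtype.val_injective (congrArg Subtype.val hee'))
  have hedge := Nat.card_le_card_of_injective f hf
  simp only [Nat.card_eq_fintype_card, Finset.coe_sort_coe, Fintype.card_coe] at hvert hedge
  omega

lemma card_add_card_edgeFinset_filter_le_of_connected_deleteEdges {M : Set (Sym2 V)}
    [DecidablePred (· ∈ M)] (h : (G.deleteEdges M).Connected) :
    Fintype.card V + #{e ∈ G.edgeFinset | e ∈ M} ≤ #G.edgeFinset + 1 := by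
  classical
  have hvert := h.card_vert_le_card_edgeSet_add_one
  have hdel : Nat.card (G.deleteEdges M).edgeSet = #{e ∈ G.edgeFinset | e ∉ M} := by
    rw [Nat.card_eq_card_toFinset]
    congr 1
    ext e
    simp
  have hsplit := card_filter_add_card_filter_not (s := G.edgeFinset) (· ∈ M)
  rw [hdel, Nat.card_eq_fintype_card] at hvert
  omega

end SimpleGraph

section ColorAvoiding

open SimpleGraph

variable {V C : Type*} {G : SimpleGraph V} {col : V → C} {c : C}

lemma connected_induce_of_forall_internallyVertexCAvoidingConnected
    (h : ∀ u v, InternallyVertexCAvoidingConnected G col c u v) (hc : ∃ v, col v ≠ c) :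
    (G.induce {v | col v ≠ c}).Connected := by
  obtain ⟨u, hu⟩ := hc
  refine induce_connected_of_patches u hu fun {v} hv => ?_
  obtain ⟨p, hp⟩ := h u v
  have hsupp : {w | w ∈ p.support} ⊆ {w | col w ≠ c} := fun w hw => by
    by_cases hwu : w = u
    · exact hwu ▸ hu
    by_cases hwv : w = v
    · exact hwv ▸ hv
    exact hp w hw hwu hwv
  exact ⟨_, hsupp, p.start_mem_support, p.end_mem_support,
    p.connected_induce_support.preconnected _ _⟩

lemma connected_deleteEdges_of_forall_internallyVertexCAvoidingConnected
    (h : ∀ u v, InternallyVertexCAvoidingConnected G col c u v) (hc : ∃ v, col v ≠ c) :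
    (G.deleteEdges {e | e.map col = s(c, c)}).Connected := by
  have hreach : ∀ u v, col u ≠ c ∨ col v ≠ c →
      (G.deleteEdges {e | e.map col = s(c, c)}).Reachable u v := by
    intro u v huv
    obtain ⟨p, hp⟩ := h u v
    have hend : ∀ w ∈ p.support, col w = c → w = u ∨ w = v := by
      intro w hw hwc
      by_contra! hne
      exact hp w hw hne.1 hne.2 hwc
    refine ⟨p.toDeleteEdges _ fun e he hmono => ?_⟩
    induction e with
    | _ x y =>
      have hxy : x ≠ y := (p.adj_of_mem_edges he).ne
      obtain ⟨hxc, hyc⟩ : col x = c ∧ col y = c := by simpa using hmono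
      rcases hend x (p.fst_mem_support_of_mem_edges he) hxc with rfl | rfl <;>
        rcases hend y (p.snd_mem_support_of_mem_edges he) hyc with rfl | rfl <;> tauto
  obtain ⟨w, hw⟩ := hc
  have : Nonempty V := ⟨w⟩
  refine ⟨fun u v => ?_⟩
  by_cases huv : col u ≠ c ∨ col v ≠ c
  · exact hreach u v huv
  · exact (hreach u w (.inr hw)).trans (hreach w v (.inl hw))

variable [Fintype V] [DecidableRel G.Adj] [DecidableEq C]

lemma card_filter_ne_le_card_filter_notMem_map_add_one
    (h : ∀ u v, InternallyVertexCAvoidingConnected G col c u v) (hc : ∃ v, col v ≠ c) :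
    #{v | col v ≠ c} ≤ #{e ∈ G.edgeFinset | c ∉ e.map col} + 1 := by
  classical
  have := card_le_card_edgeFinset_filter_add_one_of_connected_induce (G := G)
    (s := {v | col v ≠ c}) (by
      rw [coe_filter_univ]
      exact connected_induce_of_forall_internallyVertexCAvoidingConnected h hc)
  convert this using 3
  simp [Sym2.mem_map]

lemma card_add_card_filter_map_eq_diag_le
    (h : ∀ u v, InternallyVertexCAvoidingConnected G col c u v) (hc : ∃ v, col v ≠ c) :
    Fintype.card V + #{e ∈ G.edgeFinset | e.map col = s(c, c)} ≤ #G.edgeFinset + 1 :=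
  card_add_card_edgeFinset_filter_le_of_connected_deleteEdges (M := {e | e.map col = s(c, c)})
    (connected_deleteEdges_of_forall_internallyVertexCAvoidingConnected h hc)

end ColorAvoiding

section Counting

variable {C : Type*} [DecidableEq C] {colors : Finset C}

lemma card_filter_notMem_add_two {z : Sym2 C} (hz : ∀ c ∈ z, c ∈ colors) :
    #{c ∈ colors | c ∉ z} + 2 = #colors + #{c ∈ colors | z = s(c, c)} := by
  induction z with
  | _ a b =>
    have ha := hz a (Sym2.mem_mk_left a b)
    have hb := hz b (Sym2.mem_mk_right a b)
    have hsplit := card_filter_add_card_filter_not (s := colors) (fun c => c = a ∨ c = b)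
    have hor : {c ∈ colors | c = a ∨ c = b} = {a} ∪ {b} := by ext; grind
    have hand : {c ∈ colors | a = c ∧ b = c} = {a} ∩ {b} := by ext; grind
    have hincl := card_union_add_card_inter {a} {b}
    simp only [Sym2.mem_iff, Sym2.eq_iff, or_self, hand] at hsplit ⊢
    rw [hor] at hsplit
    simp only [card_singleton] at hincl
    omega

lemma sum_card_filter_notMem_map_add_two_mul {V : Type*} {col : V → C}
    (hcol : ∀ v, col v ∈ colors) (E : Finset (Sym2 V)) :
    ∑ c ∈ colors, #{e ∈ E | c ∉ e.map col} + 2 * #E =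
      #colors * #E + ∑ c ∈ colors, #{e ∈ E | e.map col = s(c, c)} := by
  have hnot := sum_card_bipartiteAbove_eq_sum_card_bipartiteBelow (s := colors) (t := E)
    fun c e => c ∉ e.map col
  have hdiag := sum_card_bipartiteAbove_eq_sum_card_bipartiteBelow (s := colors) (t := E)
    fun c e => e.map col = s(c, c)
  have hedges := sum_congr rfl fun e (_ : e ∈ E) =>
    card_filter_notMem_add_two (colors := colors) (z := e.map col) (by simp [hcol])
  simp only [sum_add_distrib, sum_const, smul_eq_mul] at hedges
  simp only [bipartiteAbove, bipartiteBelow] at hnot hdiag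
  rw [hnot, hdiag]
  linarith

lemma sum_card_filter_ne_add_card {V : Type*} [Fintype V] {col : V → C}
    (hcol : ∀ v, col v ∈ colors) :
    ∑ c ∈ colors, #{v | col v ≠ c} + Fintype.card V = #colors * Fintype.card V := by
  have hfib := card_eq_sum_card_fiberwise (s := univ) fun v (_ : v ∈ univ) => hcol v
  have hsplit (c : C) := card_filter_add_card_filter_not (s := (univ : Finset V)) (col · = c)
  rw [card_univ] at hfib hsplit
  calc ∑ c ∈ colors, #{v | col v ≠ c} + Fintype.card V
      = ∑ c ∈ colors, (#{v | col v = c} + #{v | col v ≠ c}) := by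
        rw [sum_add_distrib, ← hfib, add_comm]
    _ = #colors * Fintype.card V := by
        rw [sum_congr rfl fun c _ => hsplit c, sum_const, smul_eq_mul]

end Counting

lemma ceil_mul_div_sub_div_le {k n m : ℕ} (hk : 2 ≤ k)
    (h : 2 * k * n + 2 * m ≤ n + 2 * k * m + 2 * k) :
    ⌈(2 * (k : ℚ) - 1) * n / (2 * k - 2) - k / (k - 1)⌉ ≤ (m : ℤ) := by
  have hk' : (2 : ℚ) ≤ k := by exact_mod_cast hk
  have hq : (2 * k * n + 2 * m : ℚ) ≤ n + 2 * k * m + 2 * k := by exact_mod_cast h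
  rw [Int.ceil_le, sub_le_iff_le_add, div_le_iff₀ (by linarith)]
  have hk1 : (k : ℚ) - 1 ≠ 0 := by linarith
  calc (2 * (k : ℚ) - 1) * n ≤ (2 * k - 2) * m + 2 * k := by linarith
    _ = ((m : ℤ) + k / (k - 1) : ℚ) * (2 * k - 2) := by push_cast; field_simp

/-- Every internally vertex-color-avoiding connected graph on `n` vertices colored with exactly
`k ≥ 2` colors has at least `⌈(2k-1)n/(2k-2) - k/(k-1)⌉` edges. -/
theorem stmt16 {V C : Type*} [Fintype V] (G : SimpleGraph V) (col : V → C) (k : ℕ)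
    (hk : 2 ≤ k) (hcols : (Set.range col).ncard = k)
    (h : InternallyVertexColorAvoidingConnected G col) :
    ⌈(2 * (k : ℚ) - 1) * Fintype.card V / (2 * k - 2) - k / (k - 1)⌉ ≤
      (G.edgeSet.ncard : ℤ) := by
  classical
  set colors := univ.image col
  have hcol (v : V) : col v ∈ colors := mem_image_of_mem col (mem_univ v)
  have hcard : #colors = k := by rw [← hcols, Set.ncard_eq_toFinset_card', Set.toFinset_range]
  have hother (c : C) : ∃ v, col v ≠ c := by
    obtain ⟨c', hc', hne⟩ := exists_mem_ne (by omega : 1 < #colors) c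
    obtain ⟨v, -, rfl⟩ := mem_image.mp hc'
    exact ⟨v, hne⟩
  have hvert := sum_le_sum fun c (_ : c ∈ colors) =>
    card_filter_ne_le_card_filter_notMem_map_add_one (h c) (hother c)
  have hdiag := sum_le_sum fun c (_ : c ∈ colors) =>
    card_add_card_filter_map_eq_diag_le (h c) (hother c)
  have hfib := sum_card_filter_ne_add_card hcol
  have hdouble := sum_card_filter_notMem_map_add_two_mul hcol G.edgeFinset
  simp only [sum_add_distrib, sum_const, smul_eq_mul, mul_one, hcard] at hvert hdiag hfib hdouble
  rw [Set.ncard_eq_toFinset_card', Set.toFinset_card, ← G.edgeFinset_card]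
  apply ceil_mul_div_sub_div_le hk
  linarith
end

section
/- Let G be a vertex-color-avoiding connected graph on n vertices, and let T be a spanning tree of G. Then there exists a vertex-color-avoiding connected spanning subgraph G' of G containing T with at most 2n - 3 edges. In particular, every edge-minimal vertex-color-avoiding connected graph on n vertices has at most 2n-3 edges. -/
/-!
For a colour `c` with colour class `V_c`, deleting `V_c` from the tree `T` leaves at most
`1 + ∑_{v ∈ V_c} (deg_T v - 1)` components, and as `G - V_c` is connected, one edge of `G - V_c`
per component beyond the first reconnects them. Doing this for every colour adds at most
`∑_v (deg_T v - 1) = n - 2` edges to the `n - 1` edges of `T`. An edge-minimal graph has no edge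
outside such a subgraph.
-/

open Finset

lemma Set.ncard_image_lt_of_not_injOn {α β : Type*} {f : α → β} {s : Set α} (hs : s.Finite)
    {x y : α} (hx : x ∈ s) (hy : y ∈ s) (hxy : x ≠ y) (hf : f x = f y) :
    (f '' s).ncard < s.ncard :=
  (Set.ncard_image_le hs).lt_of_ne fun h => hxy (Set.injOn_of_ncard_image_eq h hs hx hy hf)

namespace SimpleGraph

variable {V : Type*}

/-- `G - S`, kept as a graph on all of `V`: the vertices of `S` become isolated. -/
def avoiding (G : SimpleGraph V) (S : Set V) : SimpleGraph V where
  Adj a b := G.Adj a b ∧ a ∉ S ∧ b ∉ S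
  symm := ⟨fun _ _ h => ⟨h.1.symm, h.2.2, h.2.1⟩⟩
  loopless := ⟨fun a h => G.loopless.irrefl a h.1⟩

noncomputable def numComponentsOn (H : SimpleGraph V) (R : Set V) : ℕ :=
  (H.connectedComponentMk '' R).ncard

section Avoiding

variable {G H : SimpleGraph V} {S : Set V}

lemma avoiding_le (G : SimpleGraph V) (S : Set V) : G.avoiding S ≤ G := fun _ _ h => h.1

lemma avoiding_mono (h : G ≤ H) (S : Set V) : G.avoiding S ≤ H.avoiding S :=
  fun _ _ hab => ⟨h hab.1, hab.2⟩

lemma Walk.support_avoiding_notMem {u v : V} (p : (G.avoiding S).Walk u v) (hu : u ∉ S) :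
    ∀ w ∈ p.support, w ∉ S := by
  induction p with
  | nil => simpa using hu
  | cons h _ ih => simpa [hu] using ih h.2.2

lemma Walk.reachable_avoiding {u v : V} (p : G.Walk u v) (hp : ∀ w ∈ p.support, w ∉ S) :
    (G.avoiding S).Reachable u v := by
  induction p with
  | nil => rfl
  | cons h q ih =>
    simp only [Walk.support_cons, List.mem_cons, forall_eq_or_imp] at hp
    exact (Adj.reachable (G := G.avoiding S) ⟨h, hp.1, hp.2 _ q.start_mem_support⟩).trans
      (ih hp.2)

end Avoiding

section Reconnect

variable [Finite V] {H K : SimpleGraph V} {R : Set V}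

lemma numComponentsOn_pos {u : V} (hu : u ∈ R) : 0 < H.numComponentsOn R :=
  (Set.ncard_pos (Set.toFinite _)).mpr ⟨_, u, hu, rfl⟩

lemma numComponentsOn_sup_edge_lt {u a b : V} (hu : u ∈ R) (hb : b ∈ R) (hab : a ≠ b)
    (hua : H.Reachable u a) (hub : ¬H.Reachable u b) :
    (H ⊔ edge a b).numComponentsOn R < H.numComponentsOn R := by
  have hle : H ≤ H ⊔ edge a b := le_sup_left
  have himage : (H ⊔ edge a b).connectedComponentMk '' R =
      ConnectedComponent.map (.ofLE hle) '' (H.connectedComponentMk '' R) := by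
    simp [Set.image_image]
  rw [numComponentsOn, himage]
  refine Set.ncard_image_lt_of_not_injOn (Set.toFinite _) ⟨u, hu, rfl⟩ ⟨b, hb, rfl⟩
    (fun h => hub (ConnectedComponent.exact h)) ?_
  simp only [ConnectedComponent.map_mk]
  exact ConnectedComponent.sound ((hua.mono hle).trans
    (Adj.reachable (.inr ((edge_adj ..).2 ⟨.inl ⟨rfl, rfl⟩, hab⟩))))

/-- Add, one at a time, an edge of `K` leaving the `H`-component of a vertex of `R`; as `K` has
all its edges inside `R`, each such edge merges two components meeting `R`. -/
theorem exists_le_reachable_ncard_sdiff_le (hHK : H ≤ K) (hKR : ∀ a b, K.Adj a b → a ∈ R)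
    (hK : ∀ u ∈ R, ∀ v ∈ R, K.Reachable u v) :
    ∃ F, H ≤ F ∧ F ≤ K ∧ (∀ u ∈ R, ∀ v ∈ R, F.Reachable u v) ∧
      (F.edgeSet \ H.edgeSet).ncard ≤ H.numComponentsOn R - 1 := by
  induction hn : H.numComponentsOn R using Nat.strong_induction_on generalizing H with
  | _ n ih =>
  by_cases hR : ∀ u ∈ R, ∀ v ∈ R, H.Reachable u v
  · exact ⟨H, le_rfl, hHK, hR, by simp⟩
  push Not at hR
  obtain ⟨u, hu, v, hv, huv⟩ := hR
  obtain ⟨p⟩ := hK u hu v hv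
  obtain ⟨⟨⟨a, b⟩, hab⟩, -, hua, hub⟩ :=
    p.exists_boundary_dart {x | H.Reachable u x} (Reachable.refl u) huv
  dsimp only at hab hua hub
  have hlt := numComponentsOn_sup_edge_lt hu (hKR b a hab.symm) hab.ne hua hub
  obtain ⟨F, hF, hFK, hFR, hcard⟩ :=
    ih _ (hn ▸ hlt) (sup_le hHK ((edge_le_iff _).2 (.inr hab))) rfl
  refine ⟨F, le_sup_left.trans hF, hFK, hFR, ?_⟩
  have hsub : F.edgeSet \ H.edgeSet ⊆ insert s(a, b) (F.edgeSet \ (H ⊔ edge a b).edgeSet) := by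
    rintro e ⟨heF, heH⟩
    by_cases he : e = s(a, b)
    · exact he ▸ Set.mem_insert _ _
    · exact .inr ⟨heF, by simp [edgeSet_sup, heH, he]⟩
  have := numComponentsOn_pos (H := H ⊔ edge a b) hu
  calc (F.edgeSet \ H.edgeSet).ncard
      ≤ (F.edgeSet \ (H ⊔ edge a b).edgeSet).ncard + 1 :=
        (Set.ncard_le_ncard hsub).trans (Set.ncard_insert_le _ _)
    _ ≤ n - 1 := by omega

lemma exists_reachable_forall_reachable_le (H : SimpleGraph V) (f : V → ℕ) (w : V) :
    ∃ t, H.Reachable w t ∧ ∀ x, H.Reachable t x → f t ≤ f x := by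
  obtain ⟨t, hwt, hmin⟩ := Set.exists_min_image {x | H.Reachable w x} f (Set.toFinite _)
    ⟨w, Reachable.refl w⟩
  exact ⟨t, hwt, fun x htx => hmin x (hwt.trans htx)⟩

lemma ncard_edgeSet_sup_biSup_le {ι : Type*} (H : SimpleGraph V) (I : Finset ι)
    (F : ι → SimpleGraph V) :
    (H ⊔ ⨆ i ∈ I, F i).edgeSet.ncard ≤
      H.edgeSet.ncard + ∑ i ∈ I, ((F i).edgeSet \ H.edgeSet).ncard :=
  calc (H ⊔ ⨆ i ∈ I, F i).edgeSet.ncard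
      ≤ (H.edgeSet ∪ ⋃ i ∈ I, ((F i).edgeSet \ H.edgeSet)).ncard := by
        refine Set.ncard_le_ncard fun e he => ?_
        simp only [edgeSet_sup, edgeSet_iSup, Set.mem_union, Set.mem_iUnion,
          Set.mem_sdiff] at he ⊢
        tauto
    _ ≤ H.edgeSet.ncard + ∑ i ∈ I, ((F i).edgeSet \ H.edgeSet).ncard :=
        (Set.ncard_union_le _ _).trans
          (Nat.add_le_add_left (I.set_ncard_biUnion_le fun i => (F i).edgeSet \ H.edgeSet) _)

end Reconnect

section Tree

variable {T : SimpleGraph V}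

lemma Connected.exists_adj_dist_lt (hT : T.Connected) {r s : V} (hsr : s ≠ r) :
    ∃ w, T.Adj s w ∧ T.dist r w < T.dist r s := by
  obtain ⟨p, hp⟩ := hT.exists_walk_length_eq_dist s r
  cases p with
  | nil => exact absurd rfl hsr
  | cons h q =>
    refine ⟨_, h, ?_⟩
    rw [dist_comm, dist_comm (u := r)]
    have := dist_le q
    rw [Walk.length_cons] at hp
    omega

variable [Fintype V] [DecidableRel T.Adj]

lemma Connected.card_filter_dist_lt_le (hT : T.Connected) {r s : V} (hsr : s ≠ r) :
    #{w ∈ T.neighborFinset s | T.dist r s < T.dist r w} ≤ T.degree s - 1 := by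
  classical
  obtain ⟨w₀, hadj, hlt⟩ := hT.exists_adj_dist_lt hsr
  calc #{w ∈ T.neighborFinset s | T.dist r s < T.dist r w}
      ≤ #((T.neighborFinset s).erase w₀) := card_le_card fun w hw => by
        rw [mem_filter] at hw
        exact mem_erase.2 ⟨by rintro rfl; omega, hw.1⟩
    _ = T.degree s - 1 := card_erase_of_mem (by simpa using hadj)

/-- Root `T` at some `r ∈ S`: each component of `T - S` has a vertex closest to `r`, whose
neighbour towards `r` lies in `S`; a vertex `s ∈ S` serves in this way at most
`deg s - 1` components, and `r` at most `deg r`. -/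
theorem IsTree.numComponentsOn_avoiding_le (hT : T.IsTree) {S : Finset V} (hS : S.Nonempty) :
    (T.avoiding S).numComponentsOn (↑S)ᶜ ≤ 1 + ∑ s ∈ S, (T.degree s - 1) := by
  classical
  obtain ⟨r, hr⟩ := hS
  set top : Finset V :=
    {w | w ∉ S ∧ ∀ x, (T.avoiding S).Reachable w x → T.dist r w ≤ T.dist r x}
  have hcomp : (T.avoiding S).numComponentsOn (↑S)ᶜ ≤ #top := by
    refine (Set.ncard_le_ncard (t := (T.avoiding S).connectedComponentMk '' top) ?_).trans
      ((Set.ncard_image_le (Set.toFinite _)).trans (Set.ncard_coe_finset top).le)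
    rintro _ ⟨w, hw, rfl⟩
    obtain ⟨t, hwt, hmin⟩ := exists_reachable_forall_reachable_le _ (T.dist r) w
    obtain ⟨p⟩ := hwt
    refine ⟨t, ?_, (ConnectedComponent.sound ⟨p⟩).symm⟩
    simpa [top] using ⟨p.support_avoiding_notMem hw t p.end_mem_support, hmin⟩
  have htop : top ⊆ S.biUnion fun s => {w ∈ T.neighborFinset s | T.dist r s < T.dist r w} := by
    intro t ht
    simp only [top, mem_filter, mem_univ, true_and] at ht
    obtain ⟨s, hadj, hlt⟩ := hT.connected.exists_adj_dist_lt (ne_of_mem_of_not_mem hr ht.1).symm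
    have hs : s ∈ S := by
      by_contra hs
      exact absurd (ht.2 s (Adj.reachable (G := T.avoiding S) ⟨hadj, ht.1, hs⟩)) (by omega)
    exact mem_biUnion.2 ⟨s, hs, by simpa using ⟨hadj.symm, hlt⟩⟩
  calc (T.avoiding S).numComponentsOn (↑S)ᶜ
      ≤ ∑ s ∈ S, #{w ∈ T.neighborFinset s | T.dist r s < T.dist r w} :=
        hcomp.trans ((card_le_card htop).trans card_biUnion_le)
    _ = #{w ∈ T.neighborFinset r | T.dist r r < T.dist r w} +
          ∑ s ∈ S.erase r, #{w ∈ T.neighborFinset s | T.dist r s < T.dist r w} :=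
        (add_sum_erase _ _ hr).symm
    _ ≤ T.degree r + ∑ s ∈ S.erase r, (T.degree s - 1) :=
        add_le_add ((card_filter_le _ _).trans (card_neighborFinset_eq_degree T r).le)
          (sum_le_sum fun s hs => hT.connected.card_filter_dist_lt_le (ne_of_mem_erase hs))
    _ ≤ 1 + ∑ s ∈ S, (T.degree s - 1) := by
        rw [← add_sum_erase _ _ hr]
        omega

lemma IsTree.ncard_edgeSet (hT : T.IsTree) : T.edgeSet.ncard + 1 = Fintype.card V := by
  classical
  rw [Set.ncard_eq_toFinset_card']
  exact hT.card_edgeFinset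

lemma IsTree.sum_degree_sub_one (hT : T.IsTree) :
    ∑ v, (T.degree v - 1) = Fintype.card V - 2 := by
  classical
  rcases subsingleton_or_nontrivial V with hV | hV
  · have hcard := Fintype.card_le_one_iff_subsingleton.2 hV
    rw [sum_eq_zero fun v _ => by have := T.degree_lt_card_verts v; omega]
    omega
  · have hpos v : 0 < T.degree v := hT.connected.preconnected.degree_pos_of_nontrivial v
    have hsum : ∑ v, (T.degree v - 1) + Fintype.card V = ∑ v, T.degree v := by
      rw [← card_univ, card_eq_sum_ones, ← sum_add_distrib]
      exact sum_congr rfl fun v _ => Nat.sub_add_cancel (hpos v)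
    have := T.sum_degrees_eq_twice_card_edges
    have := hT.card_edgeFinset
    omega

theorem IsTree.exists_le_avoiding_ncard_sdiff_le {G : SimpleGraph V} (hT : T.IsTree)
    (hTG : T ≤ G) {S : Finset V} (hS : S.Nonempty)
    (hG : ∀ u ∉ S, ∀ v ∉ S, (G.avoiding S).Reachable u v) :
    ∃ F ≤ G.avoiding S, (∀ u ∉ S, ∀ v ∉ S, F.Reachable u v) ∧
      (F.edgeSet \ T.edgeSet).ncard ≤ ∑ s ∈ S, (T.degree s - 1) := by
  obtain ⟨F, -, hFG, hF, hcard⟩ := exists_le_reachable_ncard_sdiff_le (R := (↑S)ᶜ)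
    (avoiding_mono hTG _) (fun _ _ h => h.2.1) hG
  have := hT.numComponentsOn_avoiding_le hS
  refine ⟨F, hFG, hF, ?_⟩
  calc (F.edgeSet \ T.edgeSet).ncard ≤ (F.edgeSet \ (T.avoiding S).edgeSet).ncard :=
        Set.ncard_le_ncard (Set.sdiff_subset_sdiff_right (edgeSet_mono (avoiding_le T _)))
    _ ≤ ∑ s ∈ S, (T.degree s - 1) := by omega

end Tree

end SimpleGraph

open SimpleGraph

section

variable {V C : Type*} {G T : SimpleGraph V} {col : V → C}

lemma vertexColorAvoidingConnected_iff :
    VertexColorAvoidingConnected G col ↔ G.Preconnected ∧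
      ∀ c u v, col u ≠ c → col v ≠ c → (G.avoiding {w | col w = c}).Reachable u v := by
  refine ⟨fun h => ⟨fun u v => (h (col u) u v).1, fun c u v hu hv => ?_⟩,
    fun ⟨hG, h⟩ c u v => ⟨hG u v, ?_⟩⟩
  · obtain ⟨-, hu' | hv' | ⟨p, hp⟩⟩ := h c u v
    exacts [absurd hu' hu, absurd hv' hv, p.reachable_avoiding hp]
  · by_cases hu : col u = c
    · exact .inl hu
    by_cases hv : col v = c
    · exact .inr (.inl hv)
    obtain ⟨p⟩ := h c u v hu hv
    exact .inr (.inr ⟨p.map (.ofLE (avoiding_le _ _)), by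
      simpa using p.support_avoiding_notMem (S := {w | col w = c}) hu⟩)

namespace VertexColorAvoidingConnected

lemma mono {H : SimpleGraph V} (hGH : G ≤ H) (h : VertexColorAvoidingConnected G col) :
    VertexColorAvoidingConnected H col := by
  rw [vertexColorAvoidingConnected_iff] at h ⊢
  exact ⟨h.1.mono hGH, fun c u v hu hv => (h.2 c u v hu hv).mono (avoiding_mono hGH _)⟩

variable [Fintype V]

lemma exists_le_avoiding_color [DecidableEq C] [DecidableRel T.Adj]
    (h : VertexColorAvoidingConnected G col) (hTG : T ≤ G) (hT : T.IsTree) (c : C)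
    (hc : c ∈ Set.range col) :
    ∃ F ≤ G.avoiding {v | col v = c},
      (∀ u, col u ≠ c → ∀ v, col v ≠ c → F.Reachable u v) ∧
      (F.edgeSet \ T.edgeSet).ncard ≤ ∑ v with col v = c, (T.degree v - 1) := by
  obtain ⟨v, rfl⟩ := hc
  have hclass : ((univ.filter (col · = col v) : Finset V) : Set V) = {w | col w = col v} := by
    simp
  simpa [hclass] using
    hT.exists_le_avoiding_ncard_sdiff_le hTG (S := univ.filter (col · = col v)) ⟨v, by simp⟩
      fun u hu w hw => by
        simpa [hclass] using (vertexColorAvoidingConnected_iff.1 h).2 (col v) u w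
          (by simpa using hu) (by simpa using hw)

theorem exists_le_ncard_edgeSet_le (h : VertexColorAvoidingConnected G col) (hTG : T ≤ G)
    (hT : T.IsTree) :
    ∃ G', T ≤ G' ∧ G' ≤ G ∧ VertexColorAvoidingConnected G' col ∧
      G'.edgeSet.ncard ≤ 2 * Fintype.card V - 3 := by
  classical
  have hF : ∀ c ∈ univ.image col, ∃ F ≤ G.avoiding {v | col v = c},
      (∀ u, col u ≠ c → ∀ v, col v ≠ c → F.Reachable u v) ∧
        (F.edgeSet \ T.edgeSet).ncard ≤ ∑ v with col v = c, (T.degree v - 1) :=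
    fun c hc => h.exists_le_avoiding_color hTG hT c (by simpa using hc)
  choose! F hFG hFR hFcard using hF
  set G' := T ⊔ ⨆ c ∈ univ.image col, F c
  have hFG' c (hc : c ∈ univ.image col) : F c ≤ G' :=
    le_sup_of_le_right (le_iSup₂ (f := fun c (_ : c ∈ univ.image col) => F c) c hc)
  refine ⟨G', le_sup_left, sup_le hTG (iSup₂_le fun c hc => (hFG c hc).trans (avoiding_le _ _)),
    vertexColorAvoidingConnected_iff.2
      ⟨hT.connected.preconnected.mono le_sup_left, fun c u v hu hv => ?_⟩, ?_⟩
  · by_cases hc : c ∈ univ.image col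
    · exact (hFR c hc u hu v hv).mono fun a b hab => ⟨hFG' c hc hab, (hFG c hc hab).2⟩
    · obtain ⟨p⟩ := hT.connected.preconnected u v
      refine (p.reachable_avoiding fun w _ hw => hc ?_).mono (avoiding_mono le_sup_left _)
      exact mem_image.2 ⟨w, mem_univ w, hw⟩
  · have := hT.ncard_edgeSet
    calc G'.edgeSet.ncard
        ≤ T.edgeSet.ncard + ∑ c ∈ univ.image col, ((F c).edgeSet \ T.edgeSet).ncard :=
          ncard_edgeSet_sup_biSup_le _ _ _
      _ ≤ (Fintype.card V - 1) +
            ∑ c ∈ univ.image col, ∑ v with col v = c, (T.degree v - 1) := by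
          gcongr with c hc
          · omega
          · exact hFcard c hc
      _ = (Fintype.card V - 1) + (Fintype.card V - 2) := by
          rw [sum_fiberwise_of_maps_to fun v _ => mem_image_of_mem col (mem_univ v),
            hT.sum_degree_sub_one]
      _ ≤ 2 * Fintype.card V - 3 := by omega

end VertexColorAvoidingConnected

end

/-- Given a vertex-color-avoiding connected graph `G` on `n` vertices and a spanning tree `T`
of `G`, there is a vertex-color-avoiding connected spanning subgraph `G'` of `G` containing `T`
with at most `2n - 3` edges; in particular, every edge-minimal vertex-color-avoiding connected
graph on `n` vertices has at most `2n - 3` edges. -/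
theorem stmt17 {V C : Type*} [Fintype V] (G T : SimpleGraph V) (col : V → C)
    (h : VertexColorAvoidingConnected G col) (hTG : T ≤ G) (hT : T.IsTree) :
    (∃ G' : SimpleGraph V, T ≤ G' ∧ G' ≤ G ∧ VertexColorAvoidingConnected G' col ∧
      G'.edgeSet.ncard ≤ 2 * Fintype.card V - 3) ∧
    ((∀ e ∈ G.edgeSet, ¬ VertexColorAvoidingConnected (G.deleteEdges {e}) col) →
      G.edgeSet.ncard ≤ 2 * Fintype.card V - 3) := by
  obtain ⟨G', hTG', hG'G, hG', hcard⟩ := h.exists_le_ncard_edgeSet_le hTG hT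
  refine ⟨⟨G', hTG', hG'G, hG', hcard⟩, fun hmin => ?_⟩
  have hGG' : G.edgeSet ⊆ G'.edgeSet := fun e he => by
    by_contra he'
    refine hmin e he (hG'.mono fun a b hab => ?_)
    exact (deleteEdges_adj ..).2
      ⟨hG'G hab, fun habe => he' (Set.mem_singleton_iff.1 habe ▸ hab)⟩
  exact (Set.ncard_le_ncard hGG').trans hcard
end

section
/- For every n ≥ 3, the graph on vertices v_0,...,v_{n-1} with edge set {v_j v_{j+1} : 0 ≤ j ≤ n-2} ∪ {v_j v_{j+2} : 0 ≤ j ≤ n-3}, where v_j has color j mod 3, is vertex-color-avoiding connected, and the deletion of any single edge destroys vertex-color-avoiding connectivity; hence the bound 2n-3 on the number of edges of edge-minimal vertex-color-avoiding connected graphs colored with exactly 3 colors is sharp. -/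
/-! Along `v_0, …, v_{n-1}` the colors `0, 1, 2` repeat, so any three consecutive vertices carry
all three colors. A walk avoiding a color `c` can therefore skip the unique `c`-colored vertex
of each triple by a chord `v_j v_{j+2}`. Conversely, let `v_i v_j` (`i < j ≤ i + 2`) be an edge
and `c` the color of neither endpoint. Every other edge from `{v_0, …, v_i}` to
`{v_{i+1}, …, v_{n-1}}` has an endpoint of color `c`, so once `v_i v_j` is deleted every
`v_i`–`v_j` walk meets color `c`. -/

abbrev pathSquare (n : ℕ) : SimpleGraph (Fin n) :=
  SimpleGraph.fromRel fun i j : Fin n => j.val = i.val + 1 ∨ j.val = i.val + 2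

variable {n : ℕ}

theorem pathSquare_adj {i j : Fin n} :
    (pathSquare n).Adj i j ↔
      j.val = i.val + 1 ∨ j.val = i.val + 2 ∨ i.val = j.val + 1 ∨ i.val = j.val + 2 := by
  simp only [SimpleGraph.fromRel_adj, ne_eq, Fin.ext_iff]
  omega

theorem pathGraph_le_pathSquare (n : ℕ) : SimpleGraph.pathGraph n ≤ pathSquare n :=
  fun _ _ h => pathSquare_adj.2 (by rw [SimpleGraph.pathGraph_adj] at h; omega)

theorem pathSquare_exists_walk_avoiding (c : ℕ) {u v : Fin n} (huv : u ≤ v)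
    (hu : u.val % 3 ≠ c) (hv : v.val % 3 ≠ c) :
    ∃ p : (pathSquare n).Walk u v, ∀ w ∈ p.support, w.val % 3 ≠ c := by
  induction hk : v.val using Nat.strong_induction_on generalizing v with
  | _ k ih =>
    rcases eq_or_lt_of_le huv with rfl | hlt
    · exact ⟨.nil, by simpa using hu⟩
    rw [Fin.lt_def] at hlt
    obtain ⟨d, hd, hdv, hud⟩ :
        ∃ d, (d = 1 ∨ d = 2) ∧ (v.val - d) % 3 ≠ c ∧ u.val ≤ v.val - d := by
      by_cases h : (v.val - 1) % 3 = c
      · have : u.val ≠ v.val - 1 := fun h' => hu (h' ▸ h)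
        exact ⟨2, Or.inr rfl, by omega, by omega⟩
      · exact ⟨1, Or.inl rfl, h, by omega⟩
    obtain ⟨w, hw⟩ : ∃ w : Fin n, w.val = v.val - d := ⟨⟨v.val - d, by omega⟩, rfl⟩
    obtain ⟨p, hp⟩ := ih w.val (by omega) (Fin.le_def.2 (hw ▸ hud)) (hw ▸ hdv) rfl
    have hwv : (pathSquare n).Adj w v := pathSquare_adj.2 (by omega)
    refine ⟨p.concat hwv, fun x hx => ?_⟩
    rw [SimpleGraph.Walk.support_concat, List.mem_append, List.mem_singleton] at hx
    rcases hx with hx | rfl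
    · exact hp x hx
    · exact hv

theorem pathSquare_vertexColorAvoidingConnected (n : ℕ) :
    VertexColorAvoidingConnected (pathSquare n) (fun i : Fin n => i.val % 3) := by
  intro c u v
  refine ⟨((SimpleGraph.pathGraph_preconnected n).mono (pathGraph_le_pathSquare n)) u v, ?_⟩
  by_cases hu : u.val % 3 = c
  · exact Or.inl hu
  by_cases hv : v.val % 3 = c
  · exact Or.inr (Or.inl hv)
  refine Or.inr (Or.inr ?_)
  rcases le_total u v with h | h
  · exact pathSquare_exists_walk_avoiding c h hu hv
  · obtain ⟨p, hp⟩ := pathSquare_exists_walk_avoiding c h hv hu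
    exact ⟨p.reverse, by simpa using hp⟩

theorem pathSquare_deleteEdges_not_vertexColorAvoidingConnected {i j : Fin n} (hij : i < j)
    (hadj : (pathSquare n).Adj i j) :
    ¬ VertexColorAvoidingConnected ((pathSquare n).deleteEdges {s(i, j)})
      (fun i : Fin n => i.val % 3) := by
  rw [Fin.lt_def] at hij
  rw [pathSquare_adj] at hadj
  intro h
  -- `2 (i + j) mod 3` is the color of neither `i` nor `j`
  obtain ⟨-, hi | hj | ⟨p, hp⟩⟩ := h (2 * (i.val + j.val) % 3) i j
  · simp only at hi; omega
  · simp only at hj; omega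
  obtain ⟨d, hd, hfst, hsnd⟩ :=
    p.exists_boundary_dart {x | x.val ≤ i.val} (le_refl i.val) (by simp; omega)
  have hx := hp _ (p.dart_fst_mem_support_of_mem_darts hd)
  have hy := hp _ (p.dart_snd_mem_support_of_mem_darts hd)
  have hcross := d.adj
  simp only [Set.mem_ofPred_eq, not_le] at hfst hsnd hx hy
  rw [SimpleGraph.deleteEdges_adj, pathSquare_adj, Set.mem_singleton_iff, Sym2.eq_iff,
    Fin.ext_iff, Fin.ext_iff, Fin.ext_iff, Fin.ext_iff] at hcross
  omega

def pathStepEdge (n d : ℕ) (k : Fin (n - d)) : Sym2 (Fin n) :=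
  s(⟨k.val, by omega⟩, ⟨k.val + d, by omega⟩)

theorem mem_range_pathStepEdge {d : ℕ} {x y : Fin n} :
    s(x, y) ∈ Set.range (pathStepEdge n d) ↔ y.val = x.val + d ∨ x.val = y.val + d := by
  have := x.isLt
  have := y.isLt
  constructor
  · rintro ⟨k, hk⟩
    simp only [pathStepEdge, Sym2.eq_iff, Fin.ext_iff] at hk
    omega
  · rintro (h | h)
    · refine ⟨⟨x.val, by omega⟩, ?_⟩
      simp only [pathStepEdge, Sym2.eq_iff, Fin.ext_iff, true_and]
      omega
    · refine ⟨⟨y.val, by omega⟩, ?_⟩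
      simp only [pathStepEdge, Sym2.eq_iff, Fin.ext_iff, true_and]
      omega

theorem pathStepEdge_injective (n d : ℕ) : Function.Injective (pathStepEdge n d) := by
  intro k l h
  simp only [pathStepEdge, Sym2.eq_iff, Fin.ext_iff] at h
  omega

theorem pathSquare_edgeSet (n : ℕ) :
    (pathSquare n).edgeSet = Set.range (pathStepEdge n 1) ∪ Set.range (pathStepEdge n 2) := by
  ext e
  induction e using Sym2.ind with
  | _ x y =>
    rw [SimpleGraph.mem_edgeSet, pathSquare_adj, Set.mem_union, mem_range_pathStepEdge,
      mem_range_pathStepEdge]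
    omega

theorem pathSquare_edgeSet_ncard (n : ℕ) : (pathSquare n).edgeSet.ncard = 2 * n - 3 := by
  have hdisj : Disjoint (Set.range (pathStepEdge n 1)) (Set.range (pathStepEdge n 2)) := by
    rw [Set.disjoint_left]
    rintro e ⟨k, rfl⟩ h2
    rw [pathStepEdge, mem_range_pathStepEdge] at h2
    simp only at h2
    omega
  rw [pathSquare_edgeSet, Set.ncard_union_eq hdisj,
    Set.ncard_range_of_injective (pathStepEdge_injective n 1),
    Set.ncard_range_of_injective (pathStepEdge_injective n 2), Nat.card_fin, Nat.card_fin]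
  omega

theorem stmt19_general (n : ℕ) :
    VertexColorAvoidingConnected
        (SimpleGraph.fromRel fun i j : Fin n => j.val = i.val + 1 ∨ j.val = i.val + 2)
        (fun i : Fin n => i.val % 3) ∧
    (∀ e ∈ (SimpleGraph.fromRel
        fun i j : Fin n => j.val = i.val + 1 ∨ j.val = i.val + 2).edgeSet,
      ¬ VertexColorAvoidingConnected
          ((SimpleGraph.fromRel
              fun i j : Fin n => j.val = i.val + 1 ∨ j.val = i.val + 2).deleteEdges {e})
          (fun i : Fin n => i.val % 3)) ∧
    (SimpleGraph.fromRel
        fun i j : Fin n => j.val = i.val + 1 ∨ j.val = i.val + 2).edgeSet.ncard =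
      2 * n - 3 := by
  refine ⟨pathSquare_vertexColorAvoidingConnected n, fun e he => ?_,
    pathSquare_edgeSet_ncard n⟩
  induction e using Sym2.ind with
  | _ x y =>
    rcases lt_or_gt_of_ne ((SimpleGraph.mem_edgeSet _).1 he).ne with h | h
    · exact pathSquare_deleteEdges_not_vertexColorAvoidingConnected h he
    · rw [Sym2.eq_swap]
      exact pathSquare_deleteEdges_not_vertexColorAvoidingConnected h he.symm

/-- For every `n ≥ 3`, the graph on `v_0, …, v_{n-1}` with edges `v_j v_{j+1}` and
`v_j v_{j+2}`, where `v_j` has color `j mod 3`, is vertex-color-avoiding connected, deleting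
any single edge destroys vertex-color-avoiding connectivity, and the graph has `2n - 3` edges;
hence the bound `2n - 3` on the number of edges of edge-minimal vertex-color-avoiding connected
graphs colored with exactly 3 colors is sharp. -/
theorem stmt19 (n : ℕ) (hn : 3 ≤ n) :
    VertexColorAvoidingConnected
        (SimpleGraph.fromRel fun i j : Fin n => j.val = i.val + 1 ∨ j.val = i.val + 2)
        (fun i : Fin n => i.val % 3) ∧
    (∀ e ∈ (SimpleGraph.fromRel
        fun i j : Fin n => j.val = i.val + 1 ∨ j.val = i.val + 2).edgeSet,
      ¬ VertexColorAvoidingConnected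
          ((SimpleGraph.fromRel
              fun i j : Fin n => j.val = i.val + 1 ∨ j.val = i.val + 2).deleteEdges {e})
          (fun i : Fin n => i.val % 3)) ∧
    (SimpleGraph.fromRel
        fun i j : Fin n => j.val = i.val + 1 ∨ j.val = i.val + 2).edgeSet.ncard =
      2 * n - 3 :=
  stmt19_general n
end
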